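/- arXiv:0905.2732 — 8 statements merged into one kernel-verified Lean document; each statement's English description precedes it below -/
import Mathlib

section
/- For every positive real x and every positive integer k, the inequality (k-1)!/x^k + k!/(2x^{k+1}) < (-1)^{k+1} ψ^{(k)}(x) holds, where ψ^{(k)} is the k-th polygamma function. -/
open Real Set MeasureTheory Filter

/-- The k-th polygamma function: the (k+1)-st derivative of log Γ. -/
noncomputable def polygamma (k : ℕ) : ℝ → ℝ :=
  iteratedDeriv (k + 1) (fun x => Real.log (Real.Gamma x))

/-- A function is completely monotonic on (0,∞). -/
def CompletelyMonotonicOn (f : ℝ → ℝ) : Prop :=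
  (∀ k : ℕ, ∀ x : ℝ, 0 < x → 0 ≤ (-1 : ℝ) ^ k * iteratedDeriv k f x)

namespace PG

open Topology

set_option maxHeartbeats 1000000

noncomputable def T (p : ℕ) (x : ℝ) : ℝ := ∑' n : ℕ, ((x + n) ^ p)⁻¹

noncomputable def S (x : ℝ) : ℝ := ∑' n : ℕ, (((n : ℝ) + 1)⁻¹ - (x + n)⁻¹)

lemma base_summable : Summable (fun n : ℕ => (((n : ℝ) + 1) ^ 2)⁻¹) := by
  have := (summable_nat_add_iff (f := fun n : ℕ => ((n : ℝ) ^ 2)⁻¹) 1).2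
    (by simpa [one_div] using summable_one_div_nat_pow.2 (le_refl 2))
  simpa [add_comm] using this

lemma sumT {x : ℝ} (hx : 0 < x) {p : ℕ} (hp : 2 ≤ p) :
    Summable (fun n : ℕ => ((x + n) ^ p)⁻¹) := by
  rw [← summable_nat_add_iff 1]
  refine base_summable.of_nonneg_of_le (fun n => by positivity) (fun n => ?_)
  have h1 : ((n : ℝ) + 1) ≤ x + (n + 1 : ℕ) := by push_cast; linarith
  have h2 : ((n : ℝ) + 1) ^ 2 ≤ (x + (n + 1 : ℕ)) ^ p := by
    calc ((n : ℝ) + 1) ^ 2 ≤ ((n : ℝ) + 1) ^ p := by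
          apply pow_le_pow_right₀ (by linarith [n.cast_nonneg (α := ℝ)]) hp
      _ ≤ (x + (n + 1 : ℕ)) ^ p := by
          apply pow_le_pow_left₀ (by positivity) h1
  exact inv_anti₀ (by positivity) h2

lemma hasDerivAt_aux (p : ℕ) (a t : ℝ) (h : 0 < a + t) :
    HasDerivAt (fun t => ((a + t) ^ p)⁻¹) (-(p : ℝ) * ((a + t) ^ (p + 1))⁻¹) t := by
  have h1 : HasDerivAt (fun t : ℝ => (a + t) ^ p) ((p : ℝ) * (a + t) ^ (p - 1)) t := by
    simpa using ((hasDerivAt_id t).const_add a).fun_pow p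
  have h2 := h1.inv (pow_ne_zero p h.ne')
  refine h2.congr_deriv ?_
  rcases Nat.eq_zero_or_pos p with rfl | hp
  · simp
  have hne : (a + t) ≠ 0 := h.ne'
  have key : ((a + t) ^ p) ^ 2 = (a + t) ^ (p - 1) * (a + t) ^ (p + 1) := by
    rw [← pow_mul, ← pow_add]; congr 1; omega
  rw [key]
  field_simp

lemma hasDerivAt_T {p : ℕ} (hp : 2 ≤ p) {x : ℝ} (hx : 0 < x) :
    HasDerivAt (T p) (-(p : ℝ) * T (p + 1) x) x := by
  have hx2 : 0 < x / 2 := half_pos hx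
  have key : HasDerivAt (fun z => ∑' n : ℕ, ((z + (n : ℝ)) ^ p)⁻¹)
      (∑' n : ℕ, (-(p : ℝ) * ((x + (n : ℝ)) ^ (p + 1))⁻¹)) x := by
    refine hasDerivAt_tsum_of_isPreconnected
      (u := fun n : ℕ => (p : ℝ) * ((x / 2 + n) ^ (p + 1))⁻¹)
      (g := fun (n : ℕ) (z : ℝ) => ((z + (n:ℝ)) ^ p)⁻¹)
      (g' := fun (n : ℕ) (y : ℝ) => -(p : ℝ) * ((y + (n:ℝ)) ^ (p + 1))⁻¹)
      (t := Ioi (x / 2)) (y₀ := x)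
      ((sumT hx2 (by omega)).mul_left _) isOpen_Ioi (isPreconnected_Ioi)
      (fun n y hy => ?_) (fun n y hy => ?_) (half_lt_self hx) (sumT hx (by omega))
      (half_lt_self hx)
    · have hy' : 0 < (n:ℝ) + y := by
        have : (0:ℝ) ≤ n := n.cast_nonneg
        have := hy.out; linarith
      simpa [add_comm] using hasDerivAt_aux p (n : ℝ) y hy'
    · have hy' : x / 2 + n ≤ y + n := by have := hy.out; linarith
      have h0 : (0:ℝ) < x / 2 + n := by positivity
      rw [norm_mul, norm_neg, Real.norm_natCast, norm_inv, norm_pow, Real.norm_eq_abs,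
        abs_of_pos (by linarith)]
      have h1 : ((y + (n:ℝ)) ^ (p+1))⁻¹ ≤ ((x / 2 + n) ^ (p+1))⁻¹ := by
        gcongr
      exact mul_le_mul_of_nonneg_left h1 p.cast_nonneg
  have : (∑' n : ℕ, (-(p : ℝ) * ((x + (n : ℝ)) ^ (p + 1))⁻¹)) = -(p : ℝ) * T (p+1) x := by
    rw [tsum_mul_left]; rfl
  rw [this] at key
  exact key

lemma sumS {x : ℝ} (hx : 0 < x) :
    Summable (fun n : ℕ => (((n : ℝ) + 1)⁻¹ - (x + n)⁻¹)) := by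
  rw [← summable_nat_add_iff 1]
  refine Summable.of_norm_bounded (base_summable.mul_left |x - 1|) (fun n => ?_)
  have h1 : (0:ℝ) < (n : ℝ) + 1 := by positivity
  have h2 : (0:ℝ) < ((n + 1 : ℕ) : ℝ) + 1 := by positivity
  have h3 : (0:ℝ) < x + (n + 1 : ℕ) := by positivity
  rw [Real.norm_eq_abs, inv_sub_inv h2.ne' h3.ne']
  rw [abs_div]
  have hnum : x + (n+1:ℕ) - ((n+1:ℕ) + 1) = x - 1 := by push_cast; ring
  rw [hnum]
  have hD : (0:ℝ) < (((n+1:ℕ):ℝ) + 1) * (x + (n+1:ℕ)) := by positivity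
  have hb : ((n:ℝ)+1) ^ 2 ≤ (((n+1:ℕ):ℝ) + 1) * (x + (n+1:ℕ)) := by
    push_cast
    nlinarith [n.cast_nonneg (α := ℝ)]
  rw [abs_of_pos hD, div_le_iff₀ hD]
  have h5 : (1:ℝ) ≤ ((((n:ℝ)+1)^2)⁻¹ * ((((n+1:ℕ):ℝ) + 1) * (x + (n+1:ℕ)))) := by
    calc (1:ℝ) = (((n:ℝ)+1)^2)⁻¹ * (((n:ℝ)+1)^2) := by
          rw [inv_mul_cancel₀ (by positivity)]
      _ ≤ _ := by gcongr
  calc |x - 1| = |x-1| * 1 := (mul_one _).symm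
    _ ≤ |x-1| * (((((n:ℝ)+1)^2)⁻¹ * ((((n+1:ℕ):ℝ) + 1) * (x + (n+1:ℕ))))) :=
        mul_le_mul_of_nonneg_left h5 (abs_nonneg _)
    _ = |x - 1| * (((n:ℝ)+1) ^ 2)⁻¹ * ((((n+1:ℕ):ℝ) + 1) * (x + (n+1:ℕ))) := by ring

lemma hasDerivAt_S {x : ℝ} (hx : 0 < x) : HasDerivAt S (T 2 x) x := by
  have hx2 : 0 < x / 2 := half_pos hx
  have key : HasDerivAt (fun z => ∑' n : ℕ, (((n : ℝ) + 1)⁻¹ - (z + (n:ℝ))⁻¹))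
      (∑' n : ℕ, ((x + (n : ℝ)) ^ 2)⁻¹) x := by
    refine hasDerivAt_tsum_of_isPreconnected
      (u := fun n : ℕ => ((x / 2 + n) ^ 2)⁻¹)
      (g := fun (n : ℕ) (z : ℝ) => ((n : ℝ) + 1)⁻¹ - (z + (n:ℝ))⁻¹)
      (g' := fun (n : ℕ) (y : ℝ) => ((y + (n:ℝ)) ^ 2)⁻¹)
      (t := Ioi (x / 2)) (y₀ := x)
      (sumT hx2 le_rfl) isOpen_Ioi isPreconnected_Ioi
      (fun n y hy => ?_) (fun n y hy => ?_) (half_lt_self hx) (sumS hx)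
      (half_lt_self hx)
    · have hy' : 0 < (n:ℝ) + y := by
        have : (0:ℝ) ≤ n := n.cast_nonneg
        have := hy.out; linarith
      have h0 := (hasDerivAt_aux 1 (n : ℝ) y hy').const_sub (((n:ℝ) + 1)⁻¹)
      have e1 : (fun z : ℝ => ((n:ℝ) + 1)⁻¹ - (z + (n:ℝ))⁻¹)
          = (fun z : ℝ => ((n:ℝ) + 1)⁻¹ - (((n:ℝ) + z) ^ 1)⁻¹) := by
        funext z; rw [pow_one, add_comm z]
      show HasDerivAt (fun z : ℝ => ((n:ℝ) + 1)⁻¹ - (z + (n:ℝ))⁻¹) (((y + (n:ℝ)) ^ 2)⁻¹) y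
      rw [e1]
      refine h0.congr_deriv ?_
      rw [add_comm y]
      norm_num
    · have hy' : 0 < (n:ℝ) + y := by
        have : (0:ℝ) ≤ n := n.cast_nonneg
        have := hy.out; linarith
      have hyn : (0:ℝ) < y + n := by
        have h1 := hy.out; have h2 : (0:ℝ) ≤ n := n.cast_nonneg; linarith
      rw [Real.norm_eq_abs, abs_of_pos (inv_pos.2 (pow_pos hyn 2))]
      have h0 : (0:ℝ) < x / 2 + n := by positivity
      have h1 : (x / 2 + (n:ℝ)) ^ 2 ≤ (y + (n:ℝ)) ^ 2 := by
        have := hy.out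
        gcongr <;> linarith
      exact inv_anti₀ (by positivity) h1
  exact key


noncomputable def psi : ℝ → ℝ := deriv (fun x => Real.log (Real.Gamma x))

lemma f_diff {x : ℝ} (hx : 0 < x) :
    DifferentiableAt ℝ (fun x => Real.log (Real.Gamma x)) x := by
  refine DifferentiableAt.log (Real.differentiableAt_Gamma fun m => ?_)
    (Real.Gamma_pos_of_pos hx).ne'
  have : (0:ℝ) ≤ m := m.cast_nonneg
  intro hc; rw [hc] at hx; linarith

lemma psi_rec {x : ℝ} (hx : 0 < x) : psi (x + 1) = psi x + x⁻¹ := by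
  have h_rec : ∀ y : ℝ, 0 < y →
      Real.log (Real.Gamma (y + 1)) = Real.log (Real.Gamma y) + Real.log y := by
    intro y hy
    rw [Real.Gamma_add_one hy.ne', Real.log_mul hy.ne' (Real.Gamma_pos_of_pos hy).ne', add_comm]
  unfold psi
  rw [← deriv_comp_add_const (fun x => Real.log (Real.Gamma x)) 1 x, ← Real.deriv_log,
    ← deriv_add (f_diff hx) (Real.differentiableAt_log hx.ne')]
  apply Filter.EventuallyEq.deriv_eq
  filter_upwards [eventually_gt_nhds hx] using h_rec

lemma psi_mono {a b : ℝ} (ha : 0 < a) (hab : a ≤ b) : psi a ≤ psi b := by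
  have h := Real.convexOn_log_Gamma.monotoneOn_deriv
    (fun x hx => by simpa [Function.comp_def] using f_diff hx)
  have := h (mem_Ioi.2 ha) (mem_Ioi.2 (lt_of_lt_of_le ha hab)) hab
  simpa [psi, Function.comp_def] using this

lemma psi_tele {x : ℝ} (hx : 0 < x) (N : ℕ) :
    psi (x + N) = psi x + ∑ n ∈ Finset.range N, (x + n)⁻¹ := by
  induction N with
  | zero => simp
  | succ N ih =>
    have h1 : x + (N + 1 : ℕ) = (x + N) + 1 := by push_cast; ring
    rw [h1, psi_rec (by positivity), ih, Finset.sum_range_succ]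
    ring

lemma psi_eq {x : ℝ} (hx : 0 < x) : psi x = psi 1 + S x := by
  have hA : Tendsto (fun N : ℕ => ∑ n ∈ Finset.range N, (((n:ℝ)+1)⁻¹ - (x+n)⁻¹))
      atTop (𝓝 (S x)) := by
    simpa [S] using (sumS hx).hasSum.tendsto_sum_nat
  have hdiff : ∀ N : ℕ, psi (x + N) - psi (1 + N)
      = (psi x - psi 1) - ∑ n ∈ Finset.range N, (((n:ℝ)+1)⁻¹ - (x+n)⁻¹) := by
    intro N
    rw [psi_tele hx N, psi_tele one_pos N]
    have : ∑ n ∈ Finset.range N, (((n:ℝ)+1)⁻¹ - (x+n)⁻¹)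
        = (∑ n ∈ Finset.range N, ((1:ℝ)+n)⁻¹) - ∑ n ∈ Finset.range N, (x+n)⁻¹ := by
      rw [Finset.sum_sub_distrib]
      congr 1
      exact Finset.sum_congr rfl (fun n _ => by rw [add_comm])
    rw [this]; ring
  have hm0 : 0 < ⌈x⌉₊ := Nat.ceil_pos.2 hx
  have hzero : Tendsto (fun N : ℕ => psi (x + N) - psi (1 + N)) atTop (𝓝 0) := by
    have hlow : ∀ᶠ N : ℕ in atTop, -(N:ℝ)⁻¹ ≤ psi (x + N) - psi (1 + N) := by
      filter_upwards [eventually_ge_atTop 1] with N hN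
      have hN0 : (0:ℝ) < N := by exact_mod_cast hN
      have h1 : psi N ≤ psi (x + N) := psi_mono hN0 (by linarith)
      have h2 : psi (1 + N) = psi N + (N:ℝ)⁻¹ := by rw [add_comm]; exact psi_rec hN0
      linarith
    have hupp : ∀ᶠ N : ℕ in atTop, psi (x + N) - psi (1 + N) ≤ (⌈x⌉₊ : ℝ) * (N:ℝ)⁻¹ := by
      filter_upwards [eventually_ge_atTop 1] with N hN
      have hN0 : (0:ℝ) < N := by exact_mod_cast hN
      have hxm : x ≤ (⌈x⌉₊ : ℝ) := Nat.le_ceil x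
      have hcast : ((⌈x⌉₊ - 1 : ℕ) : ℝ) = (⌈x⌉₊ : ℝ) - 1 := by
        rw [Nat.cast_sub hm0]; norm_num
      have h1 : psi (x + N) ≤ psi ((1 + N) + (⌈x⌉₊ - 1 : ℕ)) := by
        apply psi_mono (by positivity)
        rw [hcast]; linarith
      have h2 : psi ((1 + (N:ℝ)) + (⌈x⌉₊ - 1 : ℕ))
          = psi (1 + N) + ∑ j ∈ Finset.range (⌈x⌉₊ - 1), ((1 + (N:ℝ)) + j)⁻¹ :=
        psi_tele (by positivity) (⌈x⌉₊ - 1)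
      have h3 : ∑ j ∈ Finset.range (⌈x⌉₊-1), ((1 + (N:ℝ)) + j)⁻¹ ≤ (⌈x⌉₊:ℝ) * (N:ℝ)⁻¹ := by
        calc ∑ j ∈ Finset.range (⌈x⌉₊-1), ((1 + (N:ℝ)) + j)⁻¹
            ≤ ∑ j ∈ Finset.range (⌈x⌉₊-1), (N:ℝ)⁻¹ := by
              apply Finset.sum_le_sum; intro j hj
              apply inv_anti₀ hN0
              have : (0:ℝ) ≤ j := j.cast_nonneg
              linarith
          _ = ((⌈x⌉₊-1 : ℕ) : ℝ) * (N:ℝ)⁻¹ := by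
              rw [Finset.sum_const, Finset.card_range, nsmul_eq_mul]
          _ ≤ (⌈x⌉₊:ℝ) * (N:ℝ)⁻¹ := by
              apply mul_le_mul_of_nonneg_right _ (inv_nonneg.2 hN0.le)
              exact_mod_cast Nat.sub_le ⌈x⌉₊ 1
      linarith [h2 ▸ h1]
    have l1 : Tendsto (fun N : ℕ => -(N:ℝ)⁻¹) atTop (𝓝 0) := by
      simpa using (tendsto_inv_atTop_zero.comp (tendsto_natCast_atTop_atTop (R := ℝ))).neg
    have l2 : Tendsto (fun N : ℕ => (⌈x⌉₊:ℝ) * (N:ℝ)⁻¹) atTop (𝓝 0) := by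
      simpa using (tendsto_inv_atTop_zero.comp (tendsto_natCast_atTop_atTop (R := ℝ))).const_mul (⌈x⌉₊:ℝ)
    exact tendsto_of_tendsto_of_tendsto_of_le_of_le' l1 l2 hlow hupp
  have hlim : Tendsto (fun N : ℕ => psi (x + N) - psi (1 + N)) atTop
      (𝓝 ((psi x - psi 1) - S x)) := by
    simp_rw [hdiff]
    exact tendsto_const_nhds.sub hA
  have h0 := tendsto_nhds_unique hzero hlim
  linarith

lemma iteratedDeriv_psi : ∀ {k : ℕ}, ∀ (_ : 1 ≤ k), ∀ {x : ℝ}, 0 < x →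
    iteratedDeriv k psi x = (-1 : ℝ) ^ (k + 1) * (Nat.factorial k) * T (k + 1) x := by
  intro k
  induction k with
  | zero => omega
  | succ k ih =>
    intro _ x hx
    rcases Nat.eq_zero_or_pos k with rfl | hk
    · -- base case k+1 = 1
      have hev : psi =ᶠ[𝓝 x] (fun y => psi 1 + S y) :=
        Filter.eventuallyEq_of_mem (Ioi_mem_nhds hx) (fun y hy => psi_eq hy)
      have hD : HasDerivAt (fun y => psi 1 + S y) (T 2 x) x :=
        (hasDerivAt_S hx).const_add (psi 1)
      rw [iteratedDeriv_one, hev.deriv_eq, hD.deriv]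
      norm_num
    · have hev : iteratedDeriv k psi =ᶠ[𝓝 x]
          (fun y => (-1:ℝ)^(k+1) * (Nat.factorial k) * T (k+1) y) :=
        Filter.eventuallyEq_of_mem (Ioi_mem_nhds hx) (fun y hy => ih hk hy)
      have hD : HasDerivAt (fun y => (-1:ℝ)^(k+1) * (Nat.factorial k) * T (k+1) y)
          ((-1:ℝ)^(k+1) * (Nat.factorial k) * (-((k:ℝ)+1) * T (k+1+1) x)) x := by
        have := (hasDerivAt_T (p := k+1) (by omega) hx).const_mul
          ((-1:ℝ)^(k+1) * (Nat.factorial k))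
        refine this.congr_deriv ?_
        push_cast; ring
      rw [iteratedDeriv_succ, hev.deriv_eq, hD.deriv, Nat.factorial_succ]
      push_cast
      ring

lemma polygamma_eq {k : ℕ} (hk : 1 ≤ k) {x : ℝ} (hx : 0 < x) :
    (-1 : ℝ) ^ (k + 1) * polygamma k x = (Nat.factorial k) * T (k + 1) x := by
  have h1 : polygamma k x = iteratedDeriv k psi x := by
    rw [polygamma, iteratedDeriv_succ']; rfl
  rw [h1, iteratedDeriv_psi hk hx, ← mul_assoc, ← mul_assoc, ← pow_add]
  rw [Even.neg_one_pow ⟨k+1, by ring⟩, one_mul]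

lemma inner_ineq {p : ℕ} (hp : 1 ≤ p) {u v : ℝ} (hu : 0 < u) (huv : u < v) :
    (p : ℝ) * (v - u) * (v ^ (p + 1))⁻¹ < (u ^ p)⁻¹ - (v ^ p)⁻¹ := by
  have hv : 0 < v := hu.trans huv
  have key : (p : ℝ) * (v - u) * u ^ p < v * (v ^ p - u ^ p) := by
    have hgeom : v ^ p - u ^ p
        = (∑ i ∈ Finset.range p, v ^ i * u ^ (p - 1 - i)) * (v - u) := (geom_sum₂_mul v u p).symm
    have hterm : ∀ i ∈ Finset.range p, u ^ p < v * (v ^ i * u ^ (p - 1 - i)) := by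
      intro i hi
      have hi' : i < p := Finset.mem_range.1 hi
      have h1 : u ^ (i + 1) < v ^ (i + 1) := by
        apply pow_lt_pow_left₀ huv hu.le (by omega)
      have h2 : u ^ p = u ^ (i + 1) * u ^ (p - 1 - i) := by
        rw [← pow_add]; congr 1; omega
      calc u ^ p = u ^ (i + 1) * u ^ (p - 1 - i) := h2
        _ < v ^ (i + 1) * u ^ (p - 1 - i) := by
            apply mul_lt_mul_of_pos_right h1 (by positivity)
        _ = v * (v ^ i * u ^ (p - 1 - i)) := by ring
    have hsum : (p : ℝ) * u ^ p < ∑ i ∈ Finset.range p, v * (v ^ i * u ^ (p - 1 - i)) := by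
      have := Finset.sum_lt_sum_of_nonempty (Finset.nonempty_range_iff.2 (by omega)) hterm
      simpa using this
    have hvu : 0 < v - u := by linarith
    calc (p : ℝ) * (v - u) * u ^ p = ((p:ℝ) * u ^ p) * (v - u) := by ring
      _ < (∑ i ∈ Finset.range p, v * (v ^ i * u ^ (p - 1 - i))) * (v - u) :=
          mul_lt_mul_of_pos_right hsum hvu
      _ = v * (v ^ p - u ^ p) := by rw [hgeom, ← Finset.mul_sum]; ring
  have h1 : (u ^ p)⁻¹ - (v ^ p)⁻¹ = (v ^ p - u ^ p) / (u ^ p * v ^ p) := by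
    rw [inv_sub_inv (by positivity) (by positivity)]
  have h2 : (p : ℝ) * (v - u) * (v ^ (p + 1))⁻¹ = ((p:ℝ) * (v - u)) / v ^ (p + 1) := by
    ring
  rw [h1, h2, div_lt_div_iff₀ (by positivity) (by positivity)]
  calc (p:ℝ) * (v - u) * (u ^ p * v ^ p) = ((p:ℝ) * (v - u) * u ^ p) * v ^ p := by ring
    _ < (v * (v ^ p - u ^ p)) * v ^ p := mul_lt_mul_of_pos_right key (by positivity)
    _ = (v ^ p - u ^ p) * v ^ (p + 1) := by ring

lemma trapezoid {k : ℕ} (hk : 1 ≤ k) {a : ℝ} (ha : 0 < a) :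
    (k : ℝ)⁻¹ * (a ^ k)⁻¹ - (k : ℝ)⁻¹ * ((a + 1) ^ k)⁻¹
      < ((a ^ (k + 1))⁻¹ + ((a + 1) ^ (k + 1))⁻¹) / 2 := by
  set F : ℝ → ℝ := fun t => (k : ℝ)⁻¹ * (a ^ k)⁻¹ - (k : ℝ)⁻¹ * ((a + t) ^ k)⁻¹
      - t * ((a ^ (k + 1))⁻¹ + ((a + t) ^ (k + 1))⁻¹) / 2 with hF
  have hk0 : (0:ℝ) < k := by exact_mod_cast hk
  have hderiv : ∀ t ∈ Icc (0:ℝ) 1, HasDerivAt F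
      ((((a + t) ^ (k+1))⁻¹ - (a ^ (k+1))⁻¹) / 2
        - t * (-((k:ℝ)+1) * ((a + t) ^ (k + 2))⁻¹) / 2) t := by
    intro t ht
    have hat : 0 < a + t := by linarith [ht.1]
    have d1 : HasDerivAt (fun t : ℝ => (k : ℝ)⁻¹ * (a ^ k)⁻¹ - (k : ℝ)⁻¹ * ((a + t) ^ k)⁻¹)
        (((a + t) ^ (k+1))⁻¹) t := by
      have := ((hasDerivAt_aux k a t hat).const_mul ((k : ℝ)⁻¹)).const_sub
        ((k : ℝ)⁻¹ * (a ^ k)⁻¹)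
      refine this.congr_deriv ?_
      field_simp
    have d2 : HasDerivAt (fun t : ℝ => t * ((a ^ (k + 1))⁻¹ + ((a + t) ^ (k + 1))⁻¹) / 2)
        ((1 * ((a ^ (k + 1))⁻¹ + ((a + t) ^ (k + 1))⁻¹)
          + t * (-((k:ℝ)+1) * ((a + t) ^ (k + 2))⁻¹)) / 2) t := by
      have hin : HasDerivAt (fun t : ℝ => (a ^ (k + 1))⁻¹ + ((a + t) ^ (k + 1))⁻¹)
          (-((k:ℝ)+1) * ((a + t) ^ (k + 2))⁻¹) t := by
        have := (hasDerivAt_aux (k+1) a t hat).const_add ((a ^ (k + 1))⁻¹)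
        refine this.congr_deriv ?_
        push_cast; ring
      exact ((hasDerivAt_id t).mul hin).div_const 2
    have := d1.sub d2
    refine this.congr_deriv ?_
    ring
  have hF0 : F 0 = 0 := by simp [hF]
  have hanti : StrictAntiOn F (Icc (0:ℝ) 1) := by
    apply strictAntiOn_of_deriv_neg (convex_Icc 0 1)
    · exact fun t ht => (hderiv t ht).continuousAt.continuousWithinAt
    · intro t ht
      rw [interior_Icc] at ht
      rw [(hderiv t (Ioo_subset_Icc_self ht)).deriv]
      have hat : 0 < a + t := by linarith [ht.1]
      have hkey := inner_ineq (p := k + 1) (by omega) ha (by linarith [ht.1] : a < a + t)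
      have hsub : a + t - a = t := by ring
      rw [hsub] at hkey
      have hexp : (k + 1 + 1) = (k + 2) := by omega
      rw [hexp] at hkey
      push_cast at hkey ⊢
      nlinarith [hkey]
  have := hanti (left_mem_Icc.2 zero_le_one) (right_mem_Icc.2 zero_le_one) zero_lt_one
  rw [hF0] at this
  have h1 : F 1 = (k : ℝ)⁻¹ * (a ^ k)⁻¹ - (k : ℝ)⁻¹ * ((a + 1) ^ k)⁻¹
      - ((a ^ (k + 1))⁻¹ + ((a + 1) ^ (k + 1))⁻¹) / 2 := by simp [hF]
  linarith [h1 ▸ this]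

lemma T_gt {k : ℕ} (hk : 1 ≤ k) {x : ℝ} (hx : 0 < x) :
    (k : ℝ)⁻¹ * (x ^ k)⁻¹ + (x ^ (k + 1))⁻¹ / 2 < T (k + 1) x := by
  have hk0 : (0:ℝ) < k := by exact_mod_cast hk
  set f : ℕ → ℝ := fun n => ((x + n) ^ (k + 1))⁻¹ with hf
  set g : ℕ → ℝ := fun n => (k : ℝ)⁻¹ * ((x + n) ^ k)⁻¹ - (k : ℝ)⁻¹ * ((x + n + 1) ^ k)⁻¹
    with hg
  have hxn : ∀ n : ℕ, (0:ℝ) < x + n := fun n => by positivity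
  have sumf : Summable f := sumT hx (by omega)
  have sumf1 : Summable (fun n => f (n + 1)) := (summable_nat_add_iff 1).2 sumf
  have htrap : ∀ n : ℕ, g n < (f n + f (n + 1)) / 2 := by
    intro n
    have := trapezoid hk (hxn n)
    simp only [hf, hg]
    push_cast
    convert this using 3 <;> push_cast <;> ring
  have hgnonneg : ∀ n : ℕ, 0 ≤ g n := by
    intro n
    simp only [hg]
    have h1 : ((x + n + 1) ^ k)⁻¹ ≤ ((x + n) ^ k)⁻¹ := by
      apply inv_anti₀ (by positivity)
      apply pow_le_pow_left₀ (by positivity) (by linarith)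
    have : (0:ℝ) ≤ (k:ℝ)⁻¹ := by positivity
    nlinarith
  have sumfs : Summable (fun n => (f n + f (n + 1)) / 2) := ((sumf.add sumf1).div_const 2)
  have sumg : Summable g :=
    Summable.of_nonneg_of_le hgnonneg (fun n => (htrap n).le) sumfs
  -- telescoping: ∑' g = k⁻¹ * (x^k)⁻¹
  have hgsum : ∑' n, g n = (k : ℝ)⁻¹ * (x ^ k)⁻¹ := by
    have hpart : ∀ N : ℕ, ∑ n ∈ Finset.range N, g n
        = (k : ℝ)⁻¹ * (x ^ k)⁻¹ - (k : ℝ)⁻¹ * ((x + N) ^ k)⁻¹ := by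
      intro N
      have := Finset.sum_range_sub' (f := fun n : ℕ => (k : ℝ)⁻¹ * ((x + n) ^ k)⁻¹) N
      norm_num at this
      rw [← this, ← Finset.sum_sub_distrib]
      apply Finset.sum_congr rfl
      intro n _
      simp only [hg]
      push_cast
      ring_nf
    have hlim : Tendsto (fun N : ℕ => ∑ n ∈ Finset.range N, g n) atTop
        (𝓝 ((k : ℝ)⁻¹ * (x ^ k)⁻¹)) := by
      simp_rw [hpart]
      have h2 : Tendsto (fun N : ℕ => ((x + N) ^ k)⁻¹) atTop (𝓝 0) := by
        apply Tendsto.inv_tendsto_atTop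
        apply Tendsto.comp (tendsto_pow_atTop (by omega))
        apply tendsto_atTop_add_const_left
        exact tendsto_natCast_atTop_atTop (R := ℝ)
      have := (tendsto_const_nhds (x := (k : ℝ)⁻¹ * (x ^ k)⁻¹)).sub
        (h2.const_mul ((k:ℝ)⁻¹))
      simpa using this
    exact tendsto_nhds_unique sumg.hasSum.tendsto_sum_nat hlim
  -- strict inequality of sums
  have hstrict : ∑' n, g n < ∑' n, (f n + f (n + 1)) / 2 :=
    Summable.tsum_lt_tsum (fun n => (htrap n).le) (htrap 0) sumg sumfs
  have hT : T (k+1) x = ∑' n, f n := rfl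
  have h0 : ∑' n, f n = f 0 + ∑' n, f (n + 1) := Summable.tsum_eq_zero_add sumf
  have hfs : ∑' n, (f n + f (n + 1)) / 2 = (T (k+1) x + (T (k+1) x - f 0)) / 2 := by
    rw [tsum_div_const, Summable.tsum_add sumf sumf1, hT, h0]
    ring
  have hf0 : f 0 = (x ^ (k+1))⁻¹ := by simp [hf]
  rw [hgsum, hfs, hf0] at hstrict
  linarith

end PG

open Topology PG in
theorem stmt_0 (k : ℕ) (hk : 1 ≤ k) (x : ℝ) (hx : 0 < x) :
    (Nat.factorial (k - 1) : ℝ) / x ^ k + (Nat.factorial k : ℝ) / (2 * x ^ (k + 1))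
      < (-1 : ℝ) ^ (k + 1) * polygamma k x := by
  rw [polygamma_eq hk hx]
  have h := T_gt hk hx
  have hfac : (0:ℝ) < (Nat.factorial k : ℝ) := by positivity
  have h2 : (Nat.factorial k : ℝ) * ((k:ℝ)⁻¹ * (x ^ k)⁻¹ + (x ^ (k + 1))⁻¹ / 2)
      < (Nat.factorial k : ℝ) * T (k + 1) x := mul_lt_mul_of_pos_left h hfac
  refine lt_of_le_of_lt (le_of_eq ?_) h2
  have hkk : (Nat.factorial k : ℝ) = (k : ℝ) * (Nat.factorial (k - 1) : ℝ) := by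
    rw_mod_cast [Nat.mul_factorial_pred (by omega)]
  have hk0 : (k:ℝ) ≠ 0 := by positivity
  rw [hkk]
  field_simp
end

section
/- For every positive real x and every positive integer k, the inequality (-1)^{k+1} ψ^{(k)}(x) < (k-1)!/x^k + k!/x^{k+1} holds, where ψ^{(k)} is the k-th polygamma function. -/
open Real Set MeasureTheory Filter

set_option maxHeartbeats 1000000
namespace PGAux

lemma summable_base (a : ℝ) (ha : 0 < a) (p : ℕ) (hp : 2 ≤ p) :
    Summable fun m : ℕ => ((a + m) ^ p)⁻¹ := by
  have hc : 0 < min a 1 := lt_min ha one_pos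
  have hbase : Summable fun m : ℕ => (((m : ℝ) + 1) ^ 2)⁻¹ := by
    have := (summable_nat_add_iff (f := fun n : ℕ => ((n : ℝ) ^ 2)⁻¹) 1).mpr
      (by simpa only [one_div] using summable_one_div_nat_pow.mpr (le_refl 2))
    simpa using this
  refine Summable.of_nonneg_of_le (fun m => by positivity)
    (f := fun m : ℕ => ((min a 1) ^ p)⁻¹ * (((m : ℝ) + 1) ^ 2)⁻¹) (fun m => ?_)
    (hbase.mul_left _)
  have hm : (0:ℝ) ≤ (m:ℝ) := Nat.cast_nonneg m
  have h1 : min a 1 * ((m : ℝ) + 1) ≤ a + m := by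
    rcases le_total a 1 with h | h
    · rw [min_eq_left h]; nlinarith
    · rw [min_eq_right h]; nlinarith
  have h2 : (min a 1) ^ p * ((m : ℝ) + 1) ^ 2 ≤ (a + m) ^ p := by
    calc (min a 1) ^ p * ((m : ℝ) + 1) ^ 2
        ≤ (min a 1) ^ p * ((m : ℝ) + 1) ^ p :=
          mul_le_mul_of_nonneg_left (pow_le_pow_right₀ (by linarith) hp) (by positivity)
      _ = (min a 1 * ((m : ℝ) + 1)) ^ p := (mul_pow _ _ _).symm
      _ ≤ (a + m) ^ p := by
          apply pow_le_pow_left₀ (by positivity) h1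
  show ((a + ↑m) ^ p)⁻¹ ≤ ((min a 1) ^ p)⁻¹ * (((m:ℝ) + 1) ^ 2)⁻¹
  rw [← mul_inv]
  exact inv_anti₀ (by positivity) h2

noncomputable def P (p : ℕ) (x : ℝ) : ℝ := ∑' m : ℕ, ((x + m) ^ p)⁻¹

lemma hasDerivAt_P (p : ℕ) (hp : 2 ≤ p) (x : ℝ) (hx : 0 < x) :
    HasDerivAt (P p) (-(p : ℝ) * P (p + 1) x) x := by
  have hx2 : 0 < x / 2 := by linarith
  have key := hasDerivAt_tsum_of_isPreconnected
    (u := fun m : ℕ => (p : ℝ) * ((x / 2 + m) ^ (p + 1))⁻¹)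
    (g := fun (m : ℕ) (y : ℝ) => ((y + m) ^ p)⁻¹)
    (g' := fun (m : ℕ) (y : ℝ) => -(p : ℝ) * ((y + m) ^ (p + 1))⁻¹)
    (t := Ioi (x / 2)) (y₀ := x) (y := x)
    (((summable_base (x / 2) hx2 (p + 1) (by omega))).mul_left _)
    isOpen_Ioi isPreconnected_Ioi
    ?_ ?_ (by simpa using hx2.trans_le (by linarith)) (summable_base x hx p hp)
    (by simp; linarith)
  · have : (∑' m : ℕ, -(p : ℝ) * ((x + m) ^ (p + 1))⁻¹) = -(p : ℝ) * P (p + 1) x := by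
      rw [tsum_mul_left]; rfl
    rw [this] at key
    exact key
  · intro m y hy
    have hym : (0 : ℝ) < y + m := by
      have : (0:ℝ) < y := lt_trans hx2 hy
      positivity
    have h1 : HasDerivAt (fun y : ℝ => (y + (m : ℝ)) ^ p)
        ((p : ℝ) * (y + m) ^ (p - 1) * 1) y := ((hasDerivAt_id y).add_const (m : ℝ)).pow p
    have h2 := h1.inv (pow_ne_zero _ hym.ne')
    convert h2 using 1
    · rfl
    · rfl
    have hpow : (y + m) ^ (p - 1) * (y + m) ^ (p + 1) = ((y + m) ^ p) ^ 2 := by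
      rw [← pow_add, ← pow_mul]
      congr 1
      omega
    field_simp
    rw [← hpow]
    ring
  · intro m y hy
    have hy0 : (0:ℝ) < y := lt_trans hx2 hy
    have h1 : (0:ℝ) < x / 2 + m := by positivity
    have h2 : (0:ℝ) < y + m := by positivity
    have hnorm : ‖-(p : ℝ) * ((y + m) ^ (p + 1))⁻¹‖ = (p : ℝ) * ((y + m) ^ (p + 1))⁻¹ := by
      rw [norm_mul, norm_neg, Real.norm_natCast, Real.norm_eq_abs, abs_of_pos (by positivity)]
    rw [hnorm]
    refine mul_le_mul_of_nonneg_left ?_ (Nat.cast_nonneg p)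
    refine inv_anti₀ (by positivity) ?_
    gcongr
    exact le_of_lt (Set.mem_Ioi.mp hy)


noncomputable def psi (x : ℝ) : ℝ :=
  -Real.eulerMascheroniConstant - x⁻¹ + ∑' m : ℕ, (((m : ℝ) + 1)⁻¹ - (x + m + 1)⁻¹)

lemma term_eq (x : ℝ) (hx : 0 < x) (m : ℕ) :
    ((m : ℝ) + 1)⁻¹ - (x + m + 1)⁻¹ = x * (((m : ℝ) + 1) * (x + m + 1))⁻¹ := by
  have h1 : ((m : ℝ) + 1) ≠ 0 := by positivity
  have h2 : (x + m + 1) ≠ 0 := by positivity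
  field_simp
  ring

lemma term_nonneg (x : ℝ) (hx : 0 < x) (m : ℕ) :
    0 ≤ ((m : ℝ) + 1)⁻¹ - (x + m + 1)⁻¹ := by
  rw [term_eq x hx m]
  positivity

lemma term_bound (x B : ℝ) (hx : 0 < x) (hxB : x ≤ B) (m : ℕ) :
    ‖((m : ℝ) + 1)⁻¹ - (x + m + 1)⁻¹‖ ≤ B * (((m : ℝ) + 1) ^ 2)⁻¹ := by
  rw [Real.norm_eq_abs, abs_of_nonneg (term_nonneg x hx m), term_eq x hx m]
  have h1 : ((m : ℝ) + 1) * ((m : ℝ) + 1) ≤ ((m : ℝ) + 1) * (x + m + 1) := by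
    have hm : (0:ℝ) ≤ (m:ℝ) := Nat.cast_nonneg m
    nlinarith
  calc x * (((m : ℝ) + 1) * (x + m + 1))⁻¹
      ≤ B * (((m : ℝ) + 1) * ((m:ℝ) + 1))⁻¹ := by
        have hm : (0:ℝ) ≤ (m:ℝ) := Nat.cast_nonneg m
        apply mul_le_mul hxB (inv_anti₀ (by positivity) h1) (by positivity) (by linarith)
    _ = B * (((m : ℝ) + 1) ^ 2)⁻¹ := by rw [sq]

lemma summable_sq : Summable fun m : ℕ => (((m : ℝ) + 1) ^ 2)⁻¹ := by
  have := (summable_nat_add_iff (f := fun n : ℕ => ((n : ℝ) ^ 2)⁻¹) 1).mpr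
    (by simpa only [one_div] using summable_one_div_nat_pow.mpr (le_refl 2))
  simpa using this

lemma summable_psi_terms (x : ℝ) (hx : 0 < x) :
    Summable fun m : ℕ => (((m : ℝ) + 1)⁻¹ - (x + m + 1)⁻¹) := by
  refine Summable.of_nonneg_of_le (term_nonneg x hx) (fun m => ?_) (summable_sq.mul_left x)
  have := term_bound x x hx le_rfl m
  rwa [Real.norm_eq_abs, abs_of_nonneg (term_nonneg x hx m)] at this

noncomputable def dlgs (n : ℕ) (x : ℝ) : ℝ :=
  Real.log n - ∑ m ∈ Finset.range (n + 1), (x + m)⁻¹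

lemma dlgs_eq (n : ℕ) (x : ℝ) :
    dlgs n x = (Real.log n - (harmonic n : ℝ))
      + (-x⁻¹ + ∑ m ∈ Finset.range n, (((m : ℝ) + 1)⁻¹ - (x + m + 1)⁻¹)) := by
  unfold dlgs
  rw [Finset.sum_range_succ' (fun m => (x + (m : ℝ))⁻¹) n]
  have hh : (harmonic n : ℝ) = ∑ m ∈ Finset.range n, ((m : ℝ) + 1)⁻¹ := by
    rw [harmonic]
    push_cast
    rfl
  have e1 : ∀ m ∈ Finset.range n, (x + (((m : ℕ) + 1 : ℕ) : ℝ))⁻¹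
      = ((m : ℝ) + 1)⁻¹ - (((m : ℝ) + 1)⁻¹ - (x + m + 1)⁻¹) := by
    intro m _
    push_cast
    ring
  rw [Finset.sum_congr rfl e1, Finset.sum_sub_distrib, ← hh]
  push_cast
  ring

lemma tuo_self {ι α β : Type*} [UniformSpace β] (f : α → β) (s : Set α) (p : Filter ι) :
    TendstoUniformlyOn (fun _ => f) f p s :=
  fun u hu => Filter.Eventually.of_forall fun _ => fun _ _ => refl_mem_uniformity hu

lemma dlgs_tendstoUniformlyOn (B : ℝ) (hB : 0 < B) :
    TendstoUniformlyOn dlgs psi atTop (Ioo 0 B) := by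
  have h1 : TendstoUniformlyOn (fun (n : ℕ) (_ : ℝ) => Real.log n - (harmonic n : ℝ))
      (fun _ => -Real.eulerMascheroniConstant) atTop (Ioo 0 B) := by
    apply Filter.Tendsto.tendstoUniformlyOn_const
    have := (Real.tendsto_harmonic_sub_log).neg
    simpa [neg_sub] using this
  have h2 : TendstoUniformlyOn
      (fun n (y : ℝ) => ∑ m ∈ Finset.range n, (((m : ℝ) + 1)⁻¹ - (y + m + 1)⁻¹))
      (fun y => ∑' m : ℕ, (((m : ℝ) + 1)⁻¹ - (y + m + 1)⁻¹)) atTop (Ioo 0 B) := by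
    apply tendstoUniformlyOn_tsum_nat (u := fun m => B * (((m : ℝ) + 1) ^ 2)⁻¹)
      (summable_sq.mul_left B)
    intro m y hy
    exact term_bound y B hy.1 hy.2.le m
  have h3 := (tuo_self (ι := ℕ) (fun y : ℝ => -y⁻¹) (Ioo 0 B) atTop).add h2
  have h4 := h1.add h3
  refine (h4.congr ?_).congr_right ?_
  · filter_upwards with n y hy
    simp only [Pi.add_apply, dlgs_eq]
  · intro y hy
    simp only [Pi.add_apply, psi]
    ring

lemma hasDerivAt_logGammaSeq (n : ℕ) (y : ℝ) (hy : 0 < y) :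
    HasDerivAt (fun z => Real.BohrMollerup.logGammaSeq z n) (dlgs n y) y := by
  unfold Real.BohrMollerup.logGammaSeq dlgs
  have hd : ∀ m ∈ Finset.range (n + 1),
      HasDerivAt (fun z : ℝ => Real.log (z + m)) ((y + m)⁻¹) y := by
    intro m _
    have hpos : (0 : ℝ) < y + m := by positivity
    have := ((hasDerivAt_id y).add_const (m : ℝ)).log hpos.ne'
    simpa [one_div] using this
  have h1 : HasDerivAt (fun z : ℝ => z * Real.log n + Real.log (n.factorial))
      (Real.log n) y := by
    simpa using ((hasDerivAt_id y).mul_const (Real.log n)).add_const (Real.log (n.factorial))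
  have h2 := h1.fun_sub (HasDerivAt.fun_sum hd)
  exact h2

lemma hasDerivAt_logGamma (x : ℝ) (hx : 0 < x) :
    HasDerivAt (fun y => Real.log (Real.Gamma y)) (psi x) x := by
  refine hasDerivAt_of_tendstoLocallyUniformlyOn (s := Ioo 0 (x + 1)) isOpen_Ioo
    (f := fun n y => Real.BohrMollerup.logGammaSeq y n) (f' := dlgs)
    ((dlgs_tendstoUniformlyOn (x + 1) (by linarith)).tendstoLocallyUniformlyOn)
    ?_ ?_ ⟨hx, lt_add_one x⟩
  · filter_upwards with n
    intro y hy
    exact hasDerivAt_logGammaSeq n y hy.1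
  · intro y hy
    exact Real.BohrMollerup.tendsto_log_gamma hy.1


lemma hasDerivAt_psi (x : ℝ) (hx : 0 < x) : HasDerivAt psi (P 2 x) x := by
  have hx2 : 0 < x / 2 := by linarith
  have hsum_u : Summable fun m : ℕ => (((x / 2 + 1) + (m : ℝ)) ^ 2)⁻¹ :=
    summable_base (x / 2 + 1) (by linarith) 2 le_rfl
  have key := hasDerivAt_tsum_of_isPreconnected
    (u := fun m : ℕ => (((x / 2 + 1) + (m : ℝ)) ^ 2)⁻¹)
    (g := fun (m : ℕ) (y : ℝ) => ((m : ℝ) + 1)⁻¹ - (y + m + 1)⁻¹)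
    (g' := fun (m : ℕ) (y : ℝ) => ((y + m + 1) ^ 2)⁻¹)
    (t := Ioi (x / 2)) (y₀ := x) (y := x)
    hsum_u isOpen_Ioi isPreconnected_Ioi ?_ ?_
    (by simp only [Set.mem_Ioi]; linarith) (summable_psi_terms x hx)
    (by simp only [Set.mem_Ioi]; linarith)
  · have h0 : HasDerivAt (fun y : ℝ => -Real.eulerMascheroniConstant - y⁻¹)
        ((x ^ 2)⁻¹) x := by
      simpa using (hasDerivAt_const x (-Real.eulerMascheroniConstant)).fun_sub
        (hasDerivAt_inv hx.ne')
    have h5 := h0.fun_add key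
    have hfun : (fun y : ℝ => (-Real.eulerMascheroniConstant - y⁻¹)
        + ∑' m : ℕ, (((m : ℝ) + 1)⁻¹ - (y + m + 1)⁻¹)) = psi := by
      funext y
      simp only [psi]
    rw [hfun] at h5
    have hval : (x ^ 2)⁻¹ + (∑' m : ℕ, ((x + m + 1) ^ 2)⁻¹) = P 2 x := by
      have hs : Summable fun m : ℕ => ((x + m) ^ 2)⁻¹ := summable_base x hx 2 le_rfl
      rw [P, Summable.tsum_eq_zero_add hs]
      congr 1
      · norm_num
      · exact tsum_congr fun m => by push_cast; ring_nf
    rwa [hval] at h5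
  · intro m y hy
    have hy0 : (0 : ℝ) < y := lt_trans hx2 hy
    have hpos : (0 : ℝ) < y + m + 1 := by positivity
    have h1 : HasDerivAt (fun y : ℝ => y + (m : ℝ) + 1) 1 y := by
      simpa using (((hasDerivAt_id y).add_const (m : ℝ)).add_const (1 : ℝ))
    have h2 := (h1.inv hpos.ne').const_sub (((m : ℝ) + 1)⁻¹)
    convert h2 using 1
    · rfl
    · rw [neg_div, neg_neg, one_div]
  · intro m y hy
    have hy' : x / 2 < y := hy
    have h1 : (0 : ℝ) < x / 2 + m + 1 := by positivity
    have h2 : (0 : ℝ) < y + m + 1 := by linarith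
    rw [Real.norm_eq_abs, abs_of_pos (by positivity)]
    refine inv_anti₀ (by positivity) ?_
    have : (x / 2 + 1) + (m : ℝ) = x / 2 + m + 1 := by ring
    rw [this]
    gcongr

lemma iteratedDeriv_logGamma (k : ℕ) (hk : 1 ≤ k) (x : ℝ) (hx : 0 < x) :
    iteratedDeriv (k + 1) (fun y => Real.log (Real.Gamma y)) x
      = (-1) ^ (k + 1) * (k.factorial : ℝ) * P (k + 1) x := by
  induction k, hk using Nat.le_induction generalizing x with
  | base =>
    rw [iteratedDeriv_succ, iteratedDeriv_one]
    have h1 : deriv (fun y => Real.log (Real.Gamma y)) =ᶠ[nhds x] psi := by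
      filter_upwards [isOpen_Ioi.mem_nhds (Set.mem_Ioi.mpr hx)] with y hy
      exact (hasDerivAt_logGamma y hy).deriv
    rw [h1.deriv_eq, (hasDerivAt_psi x hx).deriv]
    norm_num
  | succ k hk IH =>
    rw [iteratedDeriv_succ]
    have h1 : iteratedDeriv (k + 1) (fun y => Real.log (Real.Gamma y))
        =ᶠ[nhds x] fun y => (-1) ^ (k + 1) * (k.factorial : ℝ) * P (k + 1) y := by
      filter_upwards [isOpen_Ioi.mem_nhds (Set.mem_Ioi.mpr hx)] with y hy
      exact IH y hy
    rw [h1.deriv_eq]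
    have h2 := ((hasDerivAt_P (k + 1) (by omega) x hx).const_mul
      ((-1 : ℝ) ^ (k + 1) * (k.factorial : ℝ))).deriv
    rw [h2]
    push_cast [Nat.factorial_succ]
    ring


lemma bern (k : ℕ) (hk : 1 ≤ k) (u : ℝ) (hu : 0 < u) :
    u ^ k + k * u ^ (k - 1) ≤ (u + 1) ^ k := by
  induction k, hk using Nat.le_induction with
  | base => simp
  | succ k hk IH =>
    have e1 : u ^ (k - 1) * u = u ^ k := by
      rw [← pow_succ]
      congr 1
      omega
    have e2 : ((k : ℕ) + 1 : ℕ) - 1 = k := by omega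
    have h3 : (u ^ k + k * u ^ (k - 1)) * (u + 1) ≤ (u + 1) ^ k * (u + 1) :=
      mul_le_mul_of_nonneg_right IH (by linarith)
    have h4 : (0:ℝ) ≤ (k : ℝ) * u ^ (k - 1) := by positivity
    rw [e2]
    push_cast
    calc u ^ (k + 1) + ((k : ℝ) + 1) * u ^ k
        ≤ (u ^ k + k * u ^ (k - 1)) * (u + 1) := by
          rw [pow_succ]
          nlinarith [pow_pos hu k]
      _ ≤ (u + 1) ^ k * (u + 1) := h3
      _ = (u + 1) ^ (k + 1) := (pow_succ _ _).symm

lemma tail_bound (k : ℕ) (hk : 1 ≤ k) (x : ℝ) (hx : 0 < x) :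
    (k : ℝ) * ∑' m : ℕ, ((x + m + 1) ^ (k + 1))⁻¹ < (x ^ k)⁻¹ := by
  set b : ℕ → ℝ := fun m => ((x + m) ^ k)⁻¹ with hb
  have hpos : ∀ m : ℕ, (0:ℝ) < x + m := fun m => by positivity
  have key : ∀ m : ℕ, (k : ℝ) * ((x + m + 1) ^ (k + 1))⁻¹ < b m - b (m + 1) := by
    intro m
    set u : ℝ := x + m with hu
    have hu0 : 0 < u := hpos m
    have hb1 : b m = (u ^ k)⁻¹ := rfl
    have hb2 : b (m + 1) = ((u + 1) ^ k)⁻¹ := by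
      simp only [hb, hu]
      push_cast
      ring_nf
    have hB := bern k hk u hu0
    have hA : (k : ℝ) * ((u + 1) ^ (k + 1))⁻¹ < (k : ℝ) * (u ^ (k - 1) * (u ^ k * (u + 1) ^ k)⁻¹) := by
      have he : u ^ (k - 1) * (u ^ k * (u + 1) ^ k)⁻¹ = (u * (u + 1) ^ k)⁻¹ := by
        have e1 : u ^ k = u ^ (k - 1) * u := by
          rw [← pow_succ]
          congr 1
          omega
        rw [e1]
        have h1 : u ^ (k - 1) ≠ 0 := by positivity
        have h2 : u ≠ 0 := hu0.ne'
        have h3 : (u + 1) ^ k ≠ 0 := by positivity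
        field_simp
      rw [he]
      have hlt : u * (u + 1) ^ k < (u + 1) ^ (k + 1) := by
        rw [pow_succ]
        have h4 := pow_pos (by linarith : (0:ℝ) < u + 1) k
        nlinarith
      have hkpos : (0:ℝ) < (k : ℝ) := by exact_mod_cast hk
      exact mul_lt_mul_of_pos_left (inv_strictAnti₀ (by positivity) hlt) hkpos
    have hBmul : (k : ℝ) * (u ^ (k - 1) * (u ^ k * (u + 1) ^ k)⁻¹) ≤ b m - b (m + 1) := by
      rw [hb1, hb2]
      have hd : (u ^ k)⁻¹ - ((u + 1) ^ k)⁻¹ = ((u + 1) ^ k - u ^ k) * (u ^ k * (u + 1) ^ k)⁻¹ := by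
        have h1 : u ^ k ≠ 0 := by positivity
        have h3 : (u + 1) ^ k ≠ 0 := by positivity
        field_simp
      rw [hd, ← mul_assoc]
      exact mul_le_mul_of_nonneg_right (by linarith) (by positivity)
    calc (k : ℝ) * ((x + m + 1) ^ (k + 1))⁻¹
        = (k : ℝ) * ((u + 1) ^ (k + 1))⁻¹ := by rw [hu]
      _ < (k : ℝ) * (u ^ (k - 1) * (u ^ k * (u + 1) ^ k)⁻¹) := hA
      _ ≤ b m - b (m + 1) := hBmul
  have hbnn : ∀ m : ℕ, (0:ℝ) ≤ b m - b (m + 1) := fun m =>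
    le_trans (by positivity) (key m).le
  have hsum_diff : Summable fun m : ℕ => b m - b (m + 1) := by
    apply summable_of_sum_range_le (c := b 0) hbnn
    intro n
    rw [Finset.sum_range_sub' b n]
    have h0 : (0:ℝ) ≤ b n := by simp only [hb]; positivity
    linarith
  have htsum_le : (∑' m : ℕ, (b m - b (m + 1))) ≤ b 0 := by
    apply Real.tsum_le_of_sum_range_le hbnn
    intro n
    rw [Finset.sum_range_sub' b n]
    have h0 : (0:ℝ) ≤ b n := by simp only [hb]; positivity
    linarith
  have hstrict : (∑' m : ℕ, (k : ℝ) * ((x + m + 1) ^ (k + 1))⁻¹)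
      < ∑' m : ℕ, (b m - b (m + 1)) :=
    Summable.tsum_lt_tsum_of_nonneg (fun m => by positivity) (fun m => (key m).le) (key 0) hsum_diff
  have hb0 : b 0 = (x ^ k)⁻¹ := by simp [hb]
  calc (k : ℝ) * ∑' m : ℕ, ((x + m + 1) ^ (k + 1))⁻¹
      = ∑' m : ℕ, (k : ℝ) * ((x + m + 1) ^ (k + 1))⁻¹ := tsum_mul_left.symm
    _ < ∑' m : ℕ, (b m - b (m + 1)) := hstrict
    _ ≤ b 0 := htsum_le
    _ = (x ^ k)⁻¹ := hb0

end PGAux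

theorem stmt_1 (k : ℕ) (hk : 1 ≤ k) (x : ℝ) (hx : 0 < x) :
    (-1 : ℝ) ^ (k + 1) * polygamma k x
      < (Nat.factorial (k - 1) : ℝ) / x ^ k + (Nat.factorial k : ℝ) / x ^ (k + 1) := by
  have hformula := PGAux.iteratedDeriv_logGamma k hk x hx
  have h11 : ((-1 : ℝ) ^ (k + 1)) * ((-1 : ℝ) ^ (k + 1)) = 1 := by
    rw [← pow_add]
    exact Even.neg_one_pow ⟨k + 1, by ring⟩
  have hsplit : PGAux.P (k + 1) x
      = (x ^ (k + 1))⁻¹ + ∑' m : ℕ, ((x + m + 1) ^ (k + 1))⁻¹ := by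
    rw [PGAux.P, Summable.tsum_eq_zero_add (PGAux.summable_base x hx (k + 1) (by omega))]
    congr 1
    · norm_num
    · exact tsum_congr fun m => by push_cast; ring_nf
  have htail := PGAux.tail_bound k hk x hx
  set T := ∑' m : ℕ, ((x + m + 1) ^ (k + 1))⁻¹ with hT
  have hfac : (k.factorial : ℝ) = ((k - 1).factorial : ℝ) * k := by
    have := Nat.mul_factorial_pred (by omega : k ≠ 0)
    push_cast [← this]
    ring
  have hsign : (-1 : ℝ) ^ (k + 1) * polygamma k x
      = (k.factorial : ℝ) * PGAux.P (k + 1) x := by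
    show (-1 : ℝ) ^ (k + 1)
        * iteratedDeriv (k + 1) (fun x => Real.log (Real.Gamma x)) x = _
    rw [hformula]
    calc (-1 : ℝ) ^ (k + 1) * ((-1) ^ (k + 1) * (k.factorial : ℝ) * PGAux.P (k + 1) x)
        = (((-1 : ℝ) ^ (k + 1)) * ((-1 : ℝ) ^ (k + 1)))
            * ((k.factorial : ℝ) * PGAux.P (k + 1) x) := by ring
      _ = (k.factorial : ℝ) * PGAux.P (k + 1) x := by rw [h11, one_mul]
  rw [hsign, hsplit, div_eq_mul_inv, div_eq_mul_inv]
  have hfpos : (0 : ℝ) < ((k - 1).factorial : ℝ) :=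
    Nat.cast_pos.mpr (Nat.factorial_pos _)
  have h2 : ((k - 1).factorial : ℝ) * ((k : ℝ) * T)
      < ((k - 1).factorial : ℝ) * (x ^ k)⁻¹ := mul_lt_mul_of_pos_left htail hfpos
  have hexp : (k.factorial : ℝ) * ((x ^ (k + 1))⁻¹ + T)
      = (k.factorial : ℝ) * (x ^ (k + 1))⁻¹ + ((k - 1).factorial : ℝ) * ((k : ℝ) * T) := by
    rw [hfac]
    ring
  linarith
end

section
/- The function δ(t) = (e^t (t-1) + 1) / (e^t - 1)^2 is strictly decreasing on (0, ∞), with limit 1/2 as t → 0⁺ and limit 0 as t → ∞; in particular δ maps (0, ∞) bijectively onto (0, 1/2). -/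
open Real Set Filter

lemma L1 {t : ℝ} (ht : 0 < t) : 0 < Real.exp t * (t - 1) + 1 := by
  have h : StrictMonoOn (fun t : ℝ => Real.exp t * (t - 1) + 1) (Set.Ici 0) := by
    apply strictMonoOn_of_deriv_pos (convex_Ici 0)
    · fun_prop
    · intro x hx
      rw [interior_Ici] at hx
      have hd : HasDerivAt (fun t : ℝ => Real.exp t * (t - 1) + 1) (Real.exp x * x) x := by
        have := ((Real.hasDerivAt_exp x).mul ((hasDerivAt_id x).sub_const 1)).add_const 1
        exact this.congr_deriv (by simp; ring)
      rw [hd.deriv]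
      have : (0:ℝ) < x := hx
      positivity
  have := h Set.self_mem_Ici (Set.mem_Ici.2 ht.le) ht
  simpa using this

lemma L2 {t : ℝ} (ht : 0 < t) : 0 < t * Real.exp t + t - 2 * Real.exp t + 2 := by
  have h : StrictMonoOn (fun t : ℝ => t * Real.exp t + t - 2 * Real.exp t + 2) (Set.Ici 0) := by
    apply strictMonoOn_of_deriv_pos (convex_Ici 0)
    · fun_prop
    · intro x hx
      rw [interior_Ici] at hx
      have hd : HasDerivAt (fun t : ℝ => t * Real.exp t + t - 2 * Real.exp t + 2)
          (Real.exp x * (x - 1) + 1) x := by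
        have := ((((hasDerivAt_id x).mul (Real.hasDerivAt_exp x)).add (hasDerivAt_id x)).sub
          ((Real.hasDerivAt_exp x).const_mul 2)).add_const 2
        exact this.congr_deriv (by simp; ring)
      rw [hd.deriv]
      exact L1 hx
  have := h Set.self_mem_Ici (Set.mem_Ici.2 ht.le) ht
  simpa using this

lemma L3 {t : ℝ} (ht : 0 < t) : 2 * t * Real.exp t + 1 < Real.exp t ^ 2 := by
  have h : StrictMonoOn (fun t : ℝ => Real.exp t ^ 2 - 2 * t * Real.exp t - 1) (Set.Ici 0) := by
    apply strictMonoOn_of_deriv_pos (convex_Ici 0)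
    · fun_prop
    · intro x hx
      rw [interior_Ici] at hx
      have hd : HasDerivAt (fun t : ℝ => Real.exp t ^ 2 - 2 * t * Real.exp t - 1)
          (2 * Real.exp x * (Real.exp x - 1 - x)) x := by
        have := (((Real.hasDerivAt_exp x).pow 2).sub
          (((hasDerivAt_id x).const_mul 2).mul (Real.hasDerivAt_exp x))).sub_const 1
        exact this.congr_deriv (by simp; ring)
      rw [hd.deriv]
      have hlt : x + 1 < Real.exp x := Real.add_one_lt_exp (ne_of_gt hx)
      have := Real.exp_pos x
      nlinarith
  have := h Set.self_mem_Ici (Set.mem_Ici.2 ht.le) ht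
  simp only [Real.exp_zero] at this
  nlinarith [this]

lemma den_pos {t : ℝ} (ht : 0 < t) : 0 < (Real.exp t - 1) ^ 2 := by
  have : 1 < Real.exp t := Real.one_lt_exp_iff.2 ht
  nlinarith

lemma hder {t : ℝ} (ht : 0 < t) :
    HasDerivAt (fun t : ℝ => (Real.exp t * (t - 1) + 1) / (Real.exp t - 1) ^ 2)
      ((Real.exp t * t * (Real.exp t - 1) ^ 2 -
        (Real.exp t * (t - 1) + 1) * (2 * (Real.exp t - 1) * Real.exp t)) /
        ((Real.exp t - 1) ^ 2) ^ 2) t := by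
  have h1 : HasDerivAt (fun t : ℝ => Real.exp t * (t - 1) + 1) (Real.exp t * t) t := by
    have := ((Real.hasDerivAt_exp t).mul ((hasDerivAt_id t).sub_const 1)).add_const 1
    exact this.congr_deriv (by simp; ring)
  have h2 : HasDerivAt (fun t : ℝ => (Real.exp t - 1) ^ 2)
      (2 * (Real.exp t - 1) * Real.exp t) t := by
    have := ((Real.hasDerivAt_exp t).sub_const 1).pow 2
    exact this.congr_deriv (by ring)
  exact h1.div h2 (den_pos ht).ne'

lemma anti : StrictAntiOn (fun t : ℝ => (Real.exp t * (t - 1) + 1) / (Real.exp t - 1) ^ 2)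
    (Set.Ioi 0) := by
  apply strictAntiOn_of_deriv_neg (convex_Ioi 0)
  · intro x hx
    exact ((hder hx).continuousAt).continuousWithinAt
  · intro x hx
    rw [interior_Ioi] at hx
    rw [(hder hx).deriv]
    apply div_neg_of_neg_of_pos
    · have h2 := L2 hx
      have h1 : 1 < Real.exp x := Real.one_lt_exp_iff.2 hx
      have he := Real.exp_pos x
      nlinarith [mul_pos (mul_pos he (sub_pos.2 h1)) h2]
    · have := den_pos hx; positivity

lemma key0 : Tendsto (fun x : ℝ => x / (Real.exp x - 1)) (nhdsWithin 0 (Set.Ioi 0)) (nhds 1) := by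
  have h : Tendsto (slope Real.exp 0) (nhdsWithin 0 {(0:ℝ)}ᶜ) (nhds 1) := by
    have := hasDerivAt_iff_tendsto_slope.1 (Real.hasDerivAt_exp 0)
    simpa using this
  have h2 : Tendsto (fun x : ℝ => (Real.exp x - 1) / x) (nhdsWithin 0 (Set.Ioi 0)) (nhds 1) := by
    have := h.mono_left (nhdsWithin_mono 0 (fun x hx => by
      simp only [Set.mem_compl_iff, Set.mem_singleton_iff]
      exact ne_of_gt hx))
    refine this.congr fun x => ?_
    simp [slope_def_field]
  have h3 := h2.inv₀ one_ne_zero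
  simp only [inv_one] at h3
  refine h3.congr fun x => ?_
  rw [inv_div]

lemma lim0 : Tendsto (fun t : ℝ => (Real.exp t * (t - 1) + 1) / (Real.exp t - 1) ^ 2)
    (nhdsWithin 0 (Set.Ioi 0)) (nhds (1 / 2)) := by
  apply HasDerivAt.lhopital_zero_right_on_Ioo (f' := fun t => Real.exp t * t)
    (g' := fun t => 2 * (Real.exp t - 1) * Real.exp t) (b := (1:ℝ)) one_pos
  · intro x hx
    have := ((Real.hasDerivAt_exp x).mul ((hasDerivAt_id x).sub_const 1)).add_const 1
    exact this.congr_deriv (by simp; ring)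
  · intro x hx
    have := ((Real.hasDerivAt_exp x).sub_const 1).pow 2
    exact this.congr_deriv (by ring)
  · intro x hx
    have h1 : 1 < Real.exp x := Real.one_lt_exp_iff.2 hx.1
    have he := Real.exp_pos x
    have : 0 < 2 * (Real.exp x - 1) * Real.exp x := by nlinarith
    exact this.ne'
  · have hc : ContinuousAt (fun t : ℝ => Real.exp t * (t - 1) + 1) 0 := by fun_prop
    have h := hc.continuousWithinAt (s := Set.Ioi 0)
    simpa [ContinuousWithinAt] using h
  · have hc : ContinuousAt (fun t : ℝ => (Real.exp t - 1) ^ 2) 0 := by fun_prop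
    have h := hc.continuousWithinAt (s := Set.Ioi 0)
    simpa [ContinuousWithinAt] using h
  · have h := key0.const_mul (1/2 : ℝ)
    have : Tendsto (fun x : ℝ => (1/2 : ℝ) * (x / (Real.exp x - 1)))
        (nhdsWithin 0 (Set.Ioi 0)) (nhds (1/2)) := by simpa using h
    apply this.congr'
    filter_upwards [self_mem_nhdsWithin] with x hx
    have h1 : 1 < Real.exp x := Real.one_lt_exp_iff.2 hx
    have he : Real.exp x ≠ 0 := (Real.exp_pos x).ne'
    have hne : Real.exp x - 1 ≠ 0 := by linarith
    field_simp

lemma limtop : Tendsto (fun t : ℝ => (Real.exp t * (t - 1) + 1) / (Real.exp t - 1) ^ 2)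
    atTop (nhds 0) := by
  have heq : ∀ᶠ t : ℝ in atTop, (Real.exp t * (t - 1) + 1) / (Real.exp t - 1) ^ 2
      = (t * Real.exp (-t) - Real.exp (-t) + Real.exp (-t) ^ 2) / (1 - Real.exp (-t)) ^ 2 := by
    filter_upwards [eventually_gt_atTop 0] with t ht
    have h1 : 1 < Real.exp t := Real.one_lt_exp_iff.2 ht
    have he : Real.exp t ≠ 0 := (Real.exp_pos t).ne'
    have hne : Real.exp t - 1 ≠ 0 := by linarith
    rw [Real.exp_neg]
    have hne2 : 1 - (Real.exp t)⁻¹ ≠ 0 := by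
      intro h
      have : (Real.exp t)⁻¹ = 1 := by linarith
      rw [inv_eq_one] at this
      linarith
    field_simp
  rw [tendsto_congr' heq]
  have hnum : Tendsto (fun t : ℝ => t * Real.exp (-t) - Real.exp (-t) + Real.exp (-t) ^ 2)
      atTop (nhds 0) := by
    have h1 : Tendsto (fun t : ℝ => t * Real.exp (-t)) atTop (nhds 0) := by
      have := Real.tendsto_pow_mul_exp_neg_atTop_nhds_zero 1
      simpa using this
    have h2 : Tendsto (fun t : ℝ => Real.exp (-t)) atTop (nhds 0) :=
      Real.tendsto_exp_neg_atTop_nhds_zero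
    have := (h1.sub h2).add (h2.pow 2)
    simpa using this
  have hden : Tendsto (fun t : ℝ => (1 - Real.exp (-t)) ^ 2) atTop (nhds 1) := by
    have h2 : Tendsto (fun t : ℝ => Real.exp (-t)) atTop (nhds 0) :=
      Real.tendsto_exp_neg_atTop_nhds_zero
    have := (h2.const_sub 1).pow 2
    simpa using this
  have := hnum.div hden one_ne_zero
  rw [zero_div] at this
  exact this

theorem stmt_5 :
    StrictAntiOn (fun t : ℝ => (Real.exp t * (t - 1) + 1) / (Real.exp t - 1) ^ 2) (Set.Ioi 0) ∧
    Tendsto (fun t : ℝ => (Real.exp t * (t - 1) + 1) / (Real.exp t - 1) ^ 2)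
      (nhdsWithin 0 (Set.Ioi 0)) (nhds (1 / 2)) ∧
    Tendsto (fun t : ℝ => (Real.exp t * (t - 1) + 1) / (Real.exp t - 1) ^ 2)
      atTop (nhds 0) ∧
    Set.BijOn (fun t : ℝ => (Real.exp t * (t - 1) + 1) / (Real.exp t - 1) ^ 2)
      (Set.Ioi 0) (Set.Ioo 0 (1 / 2)) := by
  refine ⟨anti, lim0, limtop, ?_, anti.injOn, ?_⟩
  · -- MapsTo
    intro t ht
    simp only [Set.mem_Ioi] at ht
    have h1 : 1 < Real.exp t := Real.one_lt_exp_iff.2 ht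
    have hd := den_pos ht
    constructor
    · exact div_pos (L1 ht) hd
    · rw [div_lt_iff₀ hd]
      have := L3 ht
      nlinarith
  · -- SurjOn
    intro y hy
    obtain ⟨hy0, hy2⟩ := hy
    set f := fun t : ℝ => (Real.exp t * (t - 1) + 1) / (Real.exp t - 1) ^ 2 with hf
    have ha : ∃ a > 0, y < f a := by
      have := lim0.eventually (eventually_gt_nhds hy2)
      have h2 := this.and self_mem_nhdsWithin
      obtain ⟨a, hya, ha0⟩ := h2.exists
      exact ⟨a, ha0, hya⟩
    obtain ⟨a, ha0, hya⟩ := ha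
    have hb : ∃ b ≥ a, f b < y := by
      have := limtop.eventually (eventually_lt_nhds hy0)
      have h2 := this.and (eventually_ge_atTop a)
      obtain ⟨b, hyb, hba⟩ := h2.exists
      exact ⟨b, hba, hyb⟩
    obtain ⟨b, hba, hyb⟩ := hb
    have hcont : ContinuousOn f (Set.Icc a b) := by
      intro x hx
      have hx0 : 0 < x := lt_of_lt_of_le ha0 hx.1
      exact ((hder hx0).continuousAt).continuousWithinAt
    have hsub : Set.Icc (f b) (f a) ⊆ f '' Set.Icc a b :=
      intermediate_value_Icc' hba hcont
    have hy' : y ∈ Set.Icc (f b) (f a) := ⟨hyb.le, hya.le⟩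
    obtain ⟨x, hx, hfx⟩ := hsub hy'
    exact ⟨x, lt_of_lt_of_le ha0 hx.1, hfx⟩
end

section
/- The function s ↦ s² e^s / (e^s - 1)² is strictly decreasing on (0, ∞), with values lying in the open interval (0, 1); in particular, 0 < s² e^s / (e^s - 1)² < 1 for all s > 0. -/
open Real Set

private lemma aux_key : ∀ t : ℝ, 0 < t → 0 < t * Real.cosh t - Real.sinh t := by
  have hmono : StrictMonoOn (fun t : ℝ => t * Real.cosh t - Real.sinh t) (Set.Ici 0) := by
    apply strictMonoOn_of_deriv_pos (convex_Ici 0)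
    · exact ((continuous_id.mul Real.continuous_cosh).sub Real.continuous_sinh).continuousOn
    · intro t ht
      rw [interior_Ici] at ht
      have h : HasDerivAt (fun t : ℝ => t * Real.cosh t - Real.sinh t)
          (1 * Real.cosh t + t * Real.sinh t - Real.cosh t) t :=
        ((hasDerivAt_id t).mul (Real.hasDerivAt_cosh t)).sub (Real.hasDerivAt_sinh t)
      rw [Set.mem_Ioi] at ht
      rw [h.deriv]
      have := Real.sinh_pos_iff.mpr ht
      nlinarith [mul_pos ht this]
  intro t ht
  have := hmono (Set.self_mem_Ici) (Set.mem_Ici.mpr ht.le) ht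
  simpa using this

private lemma aux_mono : StrictMonoOn (fun t : ℝ => Real.sinh t / t) (Set.Ioi 0) := by
  apply strictMonoOn_of_deriv_pos (convex_Ioi 0)
  · exact Real.continuous_sinh.continuousOn.div continuousOn_id (fun t ht => ne_of_gt ht)
  · intro t ht
    rw [interior_Ioi, Set.mem_Ioi] at ht
    have h : HasDerivAt (fun t : ℝ => Real.sinh t / t)
        ((Real.cosh t * t - Real.sinh t * 1) / t ^ 2) t :=
      (Real.hasDerivAt_sinh t).div (hasDerivAt_id t) (ne_of_gt ht)
    rw [h.deriv]
    have hk := aux_key t ht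
    have ht2 : (0:ℝ) < t ^ 2 := by positivity
    apply div_pos _ (by positivity : (0:ℝ) < t ^ 2)
    nlinarith

private lemma aux_eq : ∀ s : ℝ, 0 < s →
    s ^ 2 * Real.exp s / (Real.exp s - 1) ^ 2 = ((s/2) / Real.sinh (s/2)) ^ 2 := by
  intro s hs
  have h2 : Real.exp (s/2) * Real.exp (s/2) = Real.exp s := by
    rw [← Real.exp_add]; ring_nf
  have h3 : Real.exp (-(s/2)) * Real.exp (s/2) = 1 := by
    rw [← Real.exp_add]; simp
  have hE : Real.exp s - 1 = 2 * Real.sinh (s/2) * Real.exp (s/2) := by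
    rw [Real.sinh_eq]; nlinarith
  have hsinh : 0 < Real.sinh (s/2) := Real.sinh_pos_iff.mpr (by linarith)
  have hexp : 0 < Real.exp (s/2) := Real.exp_pos _
  rw [hE, ← h2]
  field_simp

theorem stmt_6 :
    StrictAntiOn (fun s : ℝ => s ^ 2 * Real.exp s / (Real.exp s - 1) ^ 2) (Set.Ioi 0) ∧
    ∀ s : ℝ, 0 < s → s ^ 2 * Real.exp s / (Real.exp s - 1) ^ 2 ∈ Set.Ioo (0 : ℝ) 1 := by
  constructor
  · intro a ha b hb hab
    rw [Set.mem_Ioi] at ha hb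
    simp only
    rw [aux_eq a ha, aux_eq b hb]
    have ha2 : (0:ℝ) < a/2 := by linarith
    have hb2 : (0:ℝ) < b/2 := by linarith
    have hsa : 0 < Real.sinh (a/2) := Real.sinh_pos_iff.mpr ha2
    have hsb : 0 < Real.sinh (b/2) := Real.sinh_pos_iff.mpr hb2
    have hm := aux_mono (Set.mem_Ioi.mpr ha2) (Set.mem_Ioi.mpr hb2) (by linarith)
    simp only at hm
    have hlt : (b/2) / Real.sinh (b/2) < (a/2) / Real.sinh (a/2) := by
      rw [div_lt_div_iff₀ hsb hsa]
      rw [div_lt_div_iff₀ ha2 hb2] at hm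
      nlinarith
    have hpos : 0 < (b/2) / Real.sinh (b/2) := div_pos hb2 hsb
    have := pow_lt_pow_left₀ hlt hpos.le (two_ne_zero)
    simpa using this
  · intro s hs
    rw [aux_eq s hs]
    have hs2 : (0:ℝ) < s/2 := by linarith
    have hsinh : 0 < Real.sinh (s/2) := Real.sinh_pos_iff.mpr hs2
    have hlt : s/2 < Real.sinh (s/2) := Real.self_lt_sinh_iff.mpr hs2
    have hr : (s/2) / Real.sinh (s/2) < 1 := (div_lt_one hsinh).mpr hlt
    have hrpos : 0 < (s/2) / Real.sinh (s/2) := div_pos hs2 hsinh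
    constructor
    · positivity
    · calc ((s/2) / Real.sinh (s/2)) ^ 2 < 1 ^ 2 := by
            exact pow_lt_pow_left₀ hr hrpos.le (two_ne_zero)
        _ = 1 := one_pow 2
end

section
/- For every positive integer i and every real α ≤ i, the function x ↦ x^α |ψ^{(i)}(x)| is strictly decreasing on (0, ∞). -/
open Real Set MeasureTheory Filter Topology

namespace PG7

noncomputable def T (p : ℕ) (x : ℝ) : ℝ := ∑' n : ℕ, ((x + n) ^ p)⁻¹

lemma xn_pos {x : ℝ} (hx : 0 < x) (n : ℕ) : 0 < x + n := by positivity

lemma delta_le {x : ℝ} (hx : 0 < x) (n : ℕ) : min x 1 * ((n : ℝ) + 1) ≤ x + n := by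
  have h1 : min x 1 ≤ x := min_le_left _ _
  have h2 : min x 1 ≤ 1 := min_le_right _ _
  have h3 : (0:ℝ) ≤ n := Nat.cast_nonneg n
  nlinarith

lemma summable_aux (p : ℕ) (hp : 2 ≤ p) : Summable (fun n : ℕ => (((n : ℝ) + 1) ^ p)⁻¹) := by
  have := (summable_nat_add_iff (f := fun n : ℕ => (((n : ℝ)) ^ p)⁻¹) 1).2
    (summable_nat_pow_inv.mpr (by omega))
  refine this.congr fun n => ?_
  push_cast
  ring_nf

lemma summable_T {x : ℝ} (hx : 0 < x) {p : ℕ} (hp : 2 ≤ p) :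
    Summable (fun n : ℕ => ((x + n) ^ p)⁻¹) := by
  set δ := min x 1 with hδdef
  have hδ : 0 < δ := lt_min hx one_pos
  refine Summable.of_nonneg_of_le (fun n => by positivity) (fun n => ?_)
    (((summable_aux p hp).mul_left ((δ ^ p)⁻¹)))
  have h1 : δ * ((n : ℝ) + 1) ≤ x + n := delta_le hx n
  have h2 : (0:ℝ) < δ * ((n:ℝ) + 1) := by positivity
  calc ((x + n) ^ p)⁻¹ ≤ ((δ * ((n:ℝ)+1)) ^ p)⁻¹ := by
        apply inv_anti₀ (by positivity)
        exact pow_le_pow_left₀ h2.le h1 p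
    _ = (δ ^ p)⁻¹ * (((n:ℝ)+1) ^ p)⁻¹ := by rw [mul_pow, mul_inv]

lemma T_pos {x : ℝ} (hx : 0 < x) {p : ℕ} (hp : 2 ≤ p) : 0 < T p x := by
  have h0 : 0 < ((x + (0:ℕ)) ^ p)⁻¹ := by
    have := xn_pos hx 0; positivity
  exact Summable.tsum_pos (summable_T hx hp) (fun n => by have := xn_pos hx n; positivity) 0 h0


/-- Elementary convexity-type inequality. -/
lemma step_ineq {A : ℝ} (hA : 0 < A) (i : ℕ) :
    ((i : ℝ) + 1) * ((A + 1) ^ (i + 2))⁻¹ < (A ^ (i + 1))⁻¹ - ((A + 1) ^ (i + 1))⁻¹ := by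
  set B := A + 1 with hB
  have hBpos : 0 < B := by positivity
  -- Bernoulli: B^(i+1) ≥ A^(i+1) + (i+1) A^i
  have hbern : A ^ (i + 1) + ((i : ℝ) + 1) * A ^ i ≤ B ^ (i + 1) := by
    have hAinv : (0:ℝ) ≤ A⁻¹ := by positivity
    have h := one_add_mul_le_pow (a := A⁻¹) (by linarith : (-2:ℝ) ≤ A⁻¹) (i + 1)
    have hApow : (0:ℝ) < A ^ (i+1) := by positivity
    have h2 : (1 + ((i:ℝ)+1) * A⁻¹) * A ^ (i+1) ≤ (1 + A⁻¹) ^ (i+1) * A ^ (i+1) := by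
      have h2' := mul_le_mul_of_nonneg_right h hApow.le
      push_cast at h2' ⊢
      exact h2'
    have h3 : (1 + A⁻¹) ^ (i+1) * A ^ (i+1) = B ^ (i+1) := by
      rw [← mul_pow]; congr 1; field_simp [hB]; exact hB.symm
    have h4 : (1 + ((i:ℝ)+1) * A⁻¹) * A ^ (i+1) = A ^ (i+1) + ((i:ℝ)+1) * A ^ i := by
      field_simp; ring
    linarith [h2, h3.symm ▸ h2]
  -- now conclude
  have hAp : (0:ℝ) < A ^ (i+1) := by positivity
  have hBp : (0:ℝ) < B ^ (i+1) := by positivity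
  have hBp2 : (0:ℝ) < B ^ (i+2) := by positivity
  · -- work by clearing denominators manually
    have key : ((i:ℝ)+1) * A ^ (i+1) < B * (B ^ (i+1) - A ^ (i+1)) := by
      have h5 : ((i:ℝ)+1) * A ^ i ≤ B ^ (i+1) - A ^ (i+1) := by linarith
      have h6 : ((i:ℝ)+1) * A ^ i * A < ((i:ℝ)+1) * A ^ i * B := by
        have : (0:ℝ) < ((i:ℝ)+1) * A ^ i := by positivity
        have hAB : A < B := by simp [hB]
        exact (mul_lt_mul_iff_right₀ this).2 hAB
      calc ((i:ℝ)+1) * A ^ (i+1) = ((i:ℝ)+1) * A ^ i * A := by ring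
        _ < ((i:ℝ)+1) * A ^ i * B := h6
        _ ≤ (B ^ (i+1) - A ^ (i+1)) * B := by
            apply mul_le_mul_of_nonneg_right h5 hBpos.le
        _ = B * (B ^ (i+1) - A ^ (i+1)) := by ring
    rw [← sub_pos]
    have hexp : B ^ (i+2) = B * B ^ (i+1) := by ring
    have h7 : (A ^ (i+1))⁻¹ - (B ^ (i+1))⁻¹ = (B ^ (i+1) - A ^ (i+1)) / (A ^ (i+1) * B ^ (i+1)) := by
      field_simp
    have h8 : ((i:ℝ)+1) * (B ^ (i+2))⁻¹ = ((i:ℝ)+1) / (B * B ^ (i+1)) := by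
      rw [hexp]; ring
    rw [h7, h8]
    rw [sub_pos, div_lt_div_iff₀ (by positivity) (by positivity)]
    calc ((i:ℝ)+1) * (A ^ (i+1) * B ^ (i+1)) = (((i:ℝ)+1) * A ^ (i+1)) * B ^ (i+1) := by ring
      _ < (B * (B ^ (i+1) - A ^ (i+1))) * B ^ (i+1) := by
          exact (mul_lt_mul_iff_left₀ hBp).2 key
      _ = (B ^ (i+1) - A ^ (i+1)) * (B * B ^ (i+1)) := by ring


lemma key_ineq {x : ℝ} (hx : 0 < x) {i : ℕ} (hi : 1 ≤ i) :
    (i : ℝ) * T (i+1) x < ((i:ℝ) + 1) * (x * T (i+2) x) := by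
  set b : ℕ → ℝ := fun n => ((x + n) ^ (i+1))⁻¹ with hbdef
  set a : ℕ → ℝ := fun n => ((x + n) ^ (i+2))⁻¹ with hadef
  have hb : Summable b := summable_T hx (by omega)
  have ha : Summable a := summable_T hx (by omega)
  have hapos : ∀ n, 0 < a n := fun n => by have := xn_pos hx n; positivity
  have hbpos : ∀ n, 0 < b n := fun n => by have := xn_pos hx n; positivity
  have hxa : ∀ n : ℕ, (x + n) * a n = b n := by
    intro n
    have h := xn_pos hx n
    simp only [hadef, hbdef]
    rw [pow_succ]
    field_simp
  have hba : ∀ n : ℕ, x * a n = b n - n * a n := by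
    intro n
    have := hxa n
    nlinarith [hapos n]
  have hna : Summable (fun n : ℕ => (n:ℝ) * a n) := by
    refine Summable.of_nonneg_of_le (fun n => by positivity) (fun n => ?_) hb
    rw [← hxa n]
    have : (n:ℝ) ≤ x + n := by linarith
    exact mul_le_mul_of_nonneg_right this (hapos n).le
  have hxT : x * T (i+2) x = T (i+1) x - ∑' n : ℕ, (n:ℝ) * a n := by
    rw [T, ← tsum_mul_left]
    rw [show (fun n : ℕ => x * ((x + n) ^ (i+2))⁻¹) = fun n => b n - (n:ℝ) * a n from
      funext fun n => hba n]
    exact Summable.tsum_sub hb hna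
  -- shift the index
  have hshift : ∑' n : ℕ, (n:ℝ) * a n = ∑' n : ℕ, ((n:ℝ)+1) * a (n+1) := by
    rw [Summable.tsum_eq_zero_add hna]
    push_cast
    simp
  -- summation by parts giving `T (i+1) x`
  set c : ℕ → ℝ := fun n => ((n:ℝ)+1) * (b n - b (n+1)) with hcdef
  have hbmono : ∀ n : ℕ, b (n+1) ≤ b n := by
    intro n
    have h1 := xn_pos hx n
    apply inv_anti₀ (by positivity)
    apply pow_le_pow_left₀ h1.le
    push_cast; linarith
  have hcnonneg : ∀ n, 0 ≤ c n := fun n => by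
    have := hbmono n; rw [hcdef]; have : (0:ℝ) ≤ b n - b (n+1) := by linarith
    positivity
  have hpartial : ∀ N : ℕ, ∑ n ∈ Finset.range N, c n = (∑ n ∈ Finset.range N, b n) - N * b N := by
    intro N
    induction N with
    | zero => simp
    | succ N ih =>
      rw [Finset.sum_range_succ, Finset.sum_range_succ (f := b), ih, hcdef]
      push_cast
      ring
  have hNb : Tendsto (fun N : ℕ => (N:ℝ) * b N) atTop (𝓝 0) := by
    apply squeeze_zero' (g := fun N : ℕ => (N:ℝ)⁻¹)
    · exact Eventually.of_forall fun n => by positivity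
    · filter_upwards [eventually_ge_atTop 1] with N hN
      have hN1 : (1:ℝ) ≤ (N:ℝ) := by exact_mod_cast hN
      have h1 : ((N:ℝ)) ^ 2 ≤ (x + N) ^ (i+1) := by
        calc ((N:ℝ)) ^ 2 ≤ ((N:ℝ)) ^ (i+1) := pow_le_pow_right₀ hN1 (by omega)
          _ ≤ (x + N) ^ (i+1) := by
              apply pow_le_pow_left₀ (by linarith) (by linarith)
      have hb_le : b N ≤ (((N:ℝ)) ^ 2)⁻¹ := by
        rw [hbdef]
        exact inv_anti₀ (by positivity) h1
      calc (N:ℝ) * b N ≤ (N:ℝ) * (((N:ℝ)) ^ 2)⁻¹ :=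
            mul_le_mul_of_nonneg_left hb_le (by positivity)
        _ = (N:ℝ)⁻¹ := by field_simp
    · exact tendsto_inv_atTop_zero.comp tendsto_natCast_atTop_atTop
  have hcsum : HasSum c (T (i+1) x) := by
    rw [hasSum_iff_tendsto_nat_of_nonneg hcnonneg]
    have : Tendsto (fun N : ℕ => (∑ n ∈ Finset.range N, b n) - N * b N) atTop
        (𝓝 (T (i+1) x - 0)) := (hb.hasSum.tendsto_sum_nat).sub hNb
    rw [sub_zero] at this
    exact this.congr fun N => (hpartial N).symm
  -- termwise strict inequality
  have htermwise : ∀ n : ℕ, ((i:ℝ)+1) * (((n:ℝ)+1) * a (n+1)) < c n := by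
    intro n
    have h := step_ineq (xn_pos hx n) i
    have hn1 : (0:ℝ) < (n:ℝ)+1 := by positivity
    have h2 := mul_lt_mul_of_pos_left h hn1
    simp only [hcdef, hadef, hbdef]
    push_cast
    ring_nf at h2 ⊢
    nlinarith [h2]
  have hfsum : Summable (fun n : ℕ => ((i:ℝ)+1) * (((n:ℝ)+1) * a (n+1))) :=
    Summable.of_nonneg_of_le (fun n => by have := hapos (n+1); positivity)
      (fun n => (htermwise n).le) hcsum.summable
  have hmain : ∑' n : ℕ, ((i:ℝ)+1) * (((n:ℝ)+1) * a (n+1)) < T (i+1) x := by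
    rw [← hcsum.tsum_eq]
    exact Summable.tsum_lt_tsum_of_nonneg (fun n => by have := hapos (n+1); positivity)
      (fun n => (htermwise n).le) (htermwise 0) hcsum.summable
  rw [tsum_mul_left, ← hshift] at hmain
  rw [hxT]
  nlinarith [hmain]


/-- Reusable: differentiate a series term by term. -/
lemma hasDerivAt_tsum_on {f f' : ℕ → ℝ → ℝ} {s : Set ℝ} (hs : IsOpen s)
    {u : ℕ → ℝ} (hu : Summable u)
    (hf : ∀ n, ∀ y ∈ s, HasDerivAt (f n) (f' n y) y)
    (hb : ∀ n, ∀ y ∈ s, ‖f' n y‖ ≤ u n)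
    (hsum : ∀ y ∈ s, Summable (fun n => f n y))
    {x : ℝ} (hx : x ∈ s) :
    HasDerivAt (fun y => ∑' n, f n y) (∑' n, f' n x) x := by
  apply hasDerivAt_of_tendstoUniformlyOn (g := fun y => ∑' n, f n y) hs
    (tendstoUniformlyOn_tsum_nat hu (fun n y hy => hb n y hy))
    (Eventually.of_forall fun N y hy => HasDerivAt.sum fun n _ => hf n y hy)
    (fun y hy => by simpa only [Finset.sum_apply] using (hsum y hy).hasSum.tendsto_sum_nat) hx

lemma hasDerivAt_pow_inv {p n : ℕ} {y : ℝ} (hy : 0 < y + n) :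
    HasDerivAt (fun z : ℝ => ((z + n) ^ p)⁻¹) (-(p:ℝ) * ((y + n) ^ (p+1))⁻¹) y := by
  have h1 : HasDerivAt (fun z : ℝ => (z + n) ^ p) ((p:ℝ) * (y + n) ^ (p-1) * 1) y :=
    ((hasDerivAt_id y).add_const (n:ℝ)).pow p
  have h2 := h1.fun_inv (by positivity)
  refine HasDerivAt.congr_deriv h2 ?_
  rcases Nat.eq_zero_or_pos p with hp | hp
  · subst hp; simp
  · have hne : y + n ≠ 0 := hy.ne'
    have hexp : ((y + n) ^ p) ^ 2 = (y + n) ^ (p - 1) * (y + n) ^ (p + 1) := by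
      rw [← pow_mul, ← pow_add]
      congr 1
      omega
    rw [hexp]
    field_simp

lemma hasDerivAt_T {p : ℕ} (hp : 2 ≤ p) {x : ℝ} (hx : 0 < x) :
    HasDerivAt (T p) (-(p:ℝ) * T (p+1) x) x := by
  have hx2 : 0 < x / 2 := by linarith
  have key : HasDerivAt (fun y : ℝ => ∑' n : ℕ, ((y + n) ^ p)⁻¹)
      (∑' n : ℕ, -(p:ℝ) * ((x + n) ^ (p+1))⁻¹) x := by
    apply hasDerivAt_tsum_on (s := Ioi (x/2)) isOpen_Ioi
      (u := fun n : ℕ => (p:ℝ) * ((x/2 + n) ^ (p+1))⁻¹)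
      (((summable_T hx2 (by omega)).mul_left _))
      (fun n y hy => hasDerivAt_pow_inv (xn_pos (lt_trans hx2 hy) n))
      (fun n y hy => ?_) (fun y hy => summable_T (lt_trans hx2 hy) hp)
      (by simpa using half_lt_self hx)
    · have hy0 : 0 < y := lt_trans hx2 hy
      have h1 : 0 < x/2 + n := xn_pos hx2 n
      have h2 : x/2 + n ≤ y + n := by
        have : x/2 < y := hy
        linarith
      rw [norm_mul, norm_neg, norm_inv]
      simp only [Real.norm_natCast, norm_pow, Real.norm_eq_abs]
      rw [abs_of_pos (xn_pos hy0 n), abs_of_nonneg (by positivity : (0:ℝ) ≤ (p:ℝ))]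
      gcongr
  rw [tsum_mul_left] at key
  exact key

noncomputable def digam (x : ℝ) : ℝ :=
  -Real.eulerMascheroniConstant + ∑' n : ℕ, (((n : ℝ) + 1)⁻¹ - (x + n)⁻¹)

lemma summable_digam {y : ℝ} (hy : 0 < y) :
    Summable (fun n : ℕ => ((n : ℝ) + 1)⁻¹ - (y + n)⁻¹) := by
  set δ := min y 1 with hδdef
  have hδ : 0 < δ := lt_min hy one_pos
  rw [← summable_abs_iff]
  refine Summable.of_nonneg_of_le (fun n => abs_nonneg _) (fun n => ?_)
    ((summable_aux 2 le_rfl).mul_left (|y - 1| * δ⁻¹))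
  have h1 : 0 < y + n := xn_pos hy n
  have h2 : (0:ℝ) < (n:ℝ) + 1 := by positivity
  have heq : ((n : ℝ) + 1)⁻¹ - (y + n)⁻¹ = (y - 1) * (((n:ℝ)+1) * (y + n))⁻¹ := by
    field_simp
    ring
  rw [heq, abs_mul]
  have h3 : |(((n:ℝ)+1) * (y + n))⁻¹| = (((n:ℝ)+1) * (y + n))⁻¹ := abs_of_pos (by positivity)
  rw [h3]
  have h4 : δ * (((n:ℝ)+1) * ((n:ℝ)+1)) ≤ ((n:ℝ)+1) * (y + n) := by
    have := delta_le hy n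
    nlinarith
  calc |y - 1| * (((n:ℝ)+1) * (y + n))⁻¹
      ≤ |y - 1| * (δ * (((n:ℝ)+1) * ((n:ℝ)+1)))⁻¹ := by
        have := inv_anti₀ (by positivity : (0:ℝ) < δ * (((n:ℝ)+1) * ((n:ℝ)+1))) h4
        exact mul_le_mul_of_nonneg_left this (abs_nonneg _)
    _ = |y - 1| * δ⁻¹ * ((((n:ℝ)+1)) ^ 2)⁻¹ := by
        rw [mul_inv]
        ring_nf


lemma hasDerivAt_digam {x : ℝ} (hx : 0 < x) : HasDerivAt digam (T 2 x) x := by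
  have hx2 : 0 < x / 2 := by linarith
  have key : HasDerivAt (fun y : ℝ => ∑' n : ℕ, (((n : ℝ) + 1)⁻¹ - (y + n)⁻¹))
      (∑' n : ℕ, ((x + n) ^ 2)⁻¹) x := by
    apply hasDerivAt_tsum_on (s := Ioi (x/2)) (f' := fun (n : ℕ) (y : ℝ) => ((y + n) ^ 2)⁻¹)
      isOpen_Ioi
      (u := fun n : ℕ => ((x/2 + n) ^ 2)⁻¹)
      (summable_T hx2 le_rfl)
      (fun n y hy => ?_) (fun n y hy => ?_)
      (fun y hy => summable_digam (lt_trans hx2 hy))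
      (show x ∈ Ioi (x/2) from half_lt_self hx)
    · have hy0 : 0 < y := lt_trans hx2 hy
      have h1 : 0 < y + n := xn_pos hy0 n
      have h2 : HasDerivAt (fun z : ℝ => (z + n)⁻¹) (-1 / (y + n) ^ 2) y := by
        simpa using ((hasDerivAt_id y).add_const (n:ℝ)).fun_inv h1.ne'
      have h3 := h2.const_sub (((n : ℝ) + 1)⁻¹)
      refine HasDerivAt.congr_deriv h3 ?_
      field_simp
    · have hy0 : 0 < y := lt_trans hx2 hy
      have h1 : 0 < x/2 + n := xn_pos hx2 n
      have h2 : x/2 + n ≤ y + n := by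
        have : x/2 < y := hy
        linarith
      rw [Real.norm_eq_abs, abs_of_pos (by have := xn_pos hy0 n; positivity)]
      exact inv_anti₀ (by positivity) (pow_le_pow_left₀ h1.le h2 2)
  exact (key.const_add (-Real.eulerMascheroniConstant))

/-- Uniform convergence of constants. -/
lemma tendstoUniformlyOn_const_seq {E : ℕ → ℝ} {L : ℝ} (hE : Tendsto E atTop (𝓝 L))
    (s : Set ℝ) : TendstoUniformlyOn (fun n (_ : ℝ) => E n) (fun _ => L) atTop s := by
  rw [Metric.tendstoUniformlyOn_iff]
  intro ε hε
  filter_upwards [Metric.tendsto_nhds.mp hE ε hε] with n hn y _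
  rw [dist_comm]
  exact hn

lemma tendstoUniformlyOn_shift {F : ℕ → ℝ → ℝ} {g : ℝ → ℝ} {s : Set ℝ}
    (h : TendstoUniformlyOn F g atTop s) :
    TendstoUniformlyOn (fun n => F (n + 1)) g atTop s := by
  rw [Metric.tendstoUniformlyOn_iff] at h ⊢
  intro ε hε
  exact (tendsto_add_atTop_nat 1).eventually (h ε hε)

lemma harmonic_real (n : ℕ) : ((harmonic n : ℚ) : ℝ) = ∑ m ∈ Finset.range n, ((m : ℝ) + 1)⁻¹ := by
  rw [harmonic]
  push_cast
  rfl

lemma tendsto_E : Tendsto (fun n : ℕ => Real.log n - ∑ m ∈ Finset.range (n+1), ((m : ℝ) + 1)⁻¹)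
    atTop (𝓝 (-Real.eulerMascheroniConstant)) := by
  have h1 : Tendsto (fun n : ℕ => ((harmonic (n+1) : ℚ) : ℝ) - Real.log (n+1)) atTop
      (𝓝 Real.eulerMascheroniConstant) := by
    have := Real.tendsto_harmonic_sub_log.comp (tendsto_add_atTop_nat 1)
    refine this.congr fun n => ?_
    simp only [Function.comp_apply]
    push_cast
    ring_nf
  have h2 : Tendsto (fun n : ℕ => Real.log (n+1) - Real.log n) atTop (𝓝 0) :=
    Real.tendsto_log_nat_add_one_sub_log
  have h3 := (h2.neg).sub h1
  rw [neg_zero, zero_sub] at h3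
  refine h3.congr fun n => ?_
  rw [harmonic_real]
  ring

lemma hasDerivAt_logGamma {x : ℝ} (hx : 0 < x) :
    HasDerivAt (fun y => Real.log (Real.Gamma y)) (digam x) x := by
  have hx2 : 0 < x / 2 := by linarith
  set s : Set ℝ := Ioo (x/2) (x+1) with hsdef
  have hxs : x ∈ s := by constructor <;> [linarith; linarith]
  have hs_pos : ∀ y ∈ s, 0 < y := fun y hy => lt_trans hx2 hy.1
  set δ : ℝ := min (x/2) 1 with hδdef
  have hδ : 0 < δ := lt_min hx2 one_pos
  -- the approximating sequence and its derivative
  set F' : ℕ → ℝ → ℝ := fun n y =>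
    (Real.log n - ∑ m ∈ Finset.range (n+1), ((m : ℝ) + 1)⁻¹)
      + ∑ m ∈ Finset.range (n+1), (((m : ℝ) + 1)⁻¹ - (y + m)⁻¹) with hF'def
  apply hasDerivAt_of_tendstoUniformlyOn (f := fun n y => Real.BohrMollerup.logGammaSeq y n)
    (f' := F') (g' := digam) (l := atTop) isOpen_Ioo ?_ ?_ ?_ hxs
  · -- uniform convergence of derivatives
    have hE := tendstoUniformlyOn_const_seq tendsto_E s
    have hbound : ∀ (m : ℕ), ∀ y ∈ s, ‖((m : ℝ) + 1)⁻¹ - (y + m)⁻¹‖ ≤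
        ((x+1)+1) * δ⁻¹ * (((m:ℝ)+1) ^ 2)⁻¹ := by
      intro m y hy
      have hy0 : 0 < y := hs_pos y hy
      have h1 : 0 < y + m := xn_pos hy0 m
      have h2 : (0:ℝ) < (m:ℝ) + 1 := by positivity
      have heq : ((m : ℝ) + 1)⁻¹ - (y + m)⁻¹ = (y - 1) * (((m:ℝ)+1) * (y + m))⁻¹ := by
        field_simp
        ring
      rw [Real.norm_eq_abs, heq, abs_mul, abs_of_pos (show (0:ℝ) < (((m:ℝ)+1) * (y + m))⁻¹ by positivity)]
      have h4 : δ * (((m:ℝ)+1) * ((m:ℝ)+1)) ≤ ((m:ℝ)+1) * (y + m) := by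
        have hd1 : δ ≤ y := le_trans (min_le_left _ _) hy.1.le
        have hd2 : δ ≤ 1 := min_le_right _ _
        have h3 : (0:ℝ) ≤ m := Nat.cast_nonneg m
        have h4' : δ * ((m:ℝ)+1) ≤ y + m := by nlinarith
        nlinarith [mul_le_mul_of_nonneg_left h4' h2.le]
      have h5 : |y - 1| ≤ (x+1)+1 := by
        rw [abs_le]
        constructor <;> [linarith [hy.1]; linarith [hy.2]]
      calc |y - 1| * (((m:ℝ)+1) * (y + m))⁻¹
          ≤ ((x+1)+1) * (δ * (((m:ℝ)+1) * ((m:ℝ)+1)))⁻¹ := by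
            apply mul_le_mul h5 (inv_anti₀ (by positivity) h4) (by positivity) (by linarith)
        _ = ((x+1)+1) * δ⁻¹ * (((m:ℝ)+1) ^ 2)⁻¹ := by
            rw [mul_inv]
            ring_nf
    have hP0 : TendstoUniformlyOn
        (fun N (y : ℝ) => ∑ m ∈ Finset.range N, (((m : ℝ) + 1)⁻¹ - (y + m)⁻¹))
        (fun y => ∑' m : ℕ, (((m : ℝ) + 1)⁻¹ - (y + m)⁻¹)) atTop s :=
      tendstoUniformlyOn_tsum_nat
        (((summable_aux 2 le_rfl).mul_left (((x+1)+1) * δ⁻¹)).congr (fun m => by ring))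
        hbound
    have hP := tendstoUniformlyOn_shift hP0
    have := hE.add hP
    exact this.congr_right fun y _ => rfl
  · -- each term has the required derivative
    refine Eventually.of_forall fun n y hy => ?_
    have hy0 : 0 < y := hs_pos y hy
    have hsum : HasDerivAt (fun z : ℝ => ∑ m ∈ Finset.range (n+1), Real.log (z + m))
        (∑ m ∈ Finset.range (n+1), (y + m)⁻¹) y := by
      apply HasDerivAt.fun_sum
      intro m _
      have h1 : 0 < y + m := xn_pos hy0 m
      have := ((hasDerivAt_id y).add_const (m:ℝ)).log h1.ne'
      simpa using this
    have h1 : HasDerivAt (fun z : ℝ => z * Real.log n + Real.log (Nat.factorial n : ℝ))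
        (Real.log n) y := by
      simpa using ((hasDerivAt_id y).mul_const (Real.log n)).add_const (Real.log (Nat.factorial n : ℝ))
    have h2 := h1.sub hsum
    have heq : F' n y = Real.log n - ∑ m ∈ Finset.range (n+1), (y + m)⁻¹ := by
      simp only [hF'def]
      rw [Finset.sum_sub_distrib]
      ring
    rw [heq]
    exact h2.congr_of_eventuallyEq
      (Eventually.of_forall fun z => by simp only [Real.BohrMollerup.logGammaSeq, Pi.sub_apply])
  · exact fun y hy => Real.BohrMollerup.tendsto_log_gamma (hs_pos y hy)


lemma iteratedDeriv_congr_on {f g : ℝ → ℝ} {s : Set ℝ} (hs : IsOpen s) (h : EqOn f g s) :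
    ∀ n, EqOn (iteratedDeriv n f) (iteratedDeriv n g) s := by
  intro n
  induction n with
  | zero => simpa [iteratedDeriv_zero] using h
  | succ n ih =>
    intro x hx
    rw [iteratedDeriv_succ, iteratedDeriv_succ]
    have hev : iteratedDeriv n f =ᶠ[𝓝 x] iteratedDeriv n g := by
      filter_upwards [hs.mem_nhds hx] with y hy using ih hy
    exact hev.deriv_eq

lemma iteratedDeriv_digam {k : ℕ} (hk : 1 ≤ k) : ∀ x : ℝ, 0 < x →
    iteratedDeriv k digam x = (-1:ℝ)^(k-1) * (Nat.factorial k : ℝ) * T (k+1) x := by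
  induction k, hk using Nat.le_induction with
  | base =>
    intro x hx
    rw [iteratedDeriv_one, (hasDerivAt_digam hx).deriv]
    norm_num
  | succ k hk ih =>
    intro x hx
    rw [iteratedDeriv_succ]
    have hev : iteratedDeriv k digam =ᶠ[𝓝 x]
        (fun y => (-1:ℝ)^(k-1) * (Nat.factorial k : ℝ) * T (k+1) y) := by
        filter_upwards [isOpen_Ioi.mem_nhds (mem_Ioi.mpr hx)] with y hy using ih y hy
    rw [hev.deriv_eq]
    have hT := (hasDerivAt_T (p := k+1) (by omega) hx).const_mul ((-1:ℝ)^(k-1) * (Nat.factorial k : ℝ))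
    rw [hT.deriv]
    have hk1 : k - 1 + 1 = k := Nat.sub_add_cancel hk
    have hsign : (-1:ℝ)^k = (-1:ℝ)^(k-1) * (-1) := by rw [← pow_succ, hk1]
    rw [show k + 1 - 1 = k from rfl, Nat.factorial_succ, hsign]
    push_cast
    ring

lemma polygamma_eq {i : ℕ} (hi : 1 ≤ i) {x : ℝ} (hx : 0 < x) :
    polygamma i x = (-1:ℝ)^(i-1) * (Nat.factorial i : ℝ) * T (i+1) x := by
  have h1 : polygamma i x = iteratedDeriv i (deriv (fun x => Real.log (Real.Gamma x))) x := by
    rw [polygamma, iteratedDeriv_succ']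
  have h2 : EqOn (deriv (fun x => Real.log (Real.Gamma x))) digam (Ioi 0) :=
    fun y hy => (hasDerivAt_logGamma (mem_Ioi.mp hy)).deriv
  rw [h1, iteratedDeriv_congr_on isOpen_Ioi h2 i (mem_Ioi.mpr hx),
    iteratedDeriv_digam hi x hx]

lemma abs_polygamma {i : ℕ} (hi : 1 ≤ i) {x : ℝ} (hx : 0 < x) :
    |polygamma i x| = (Nat.factorial i : ℝ) * T (i+1) x := by
  rw [polygamma_eq hi hx, abs_mul, abs_mul, abs_pow, abs_neg, abs_one, one_pow, one_mul,
    abs_of_pos (T_pos hx (by omega)), Nat.abs_cast]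


end PG7

open PG7 in
theorem stmt_7 (i : ℕ) (hi : 1 ≤ i) (α : ℝ) (hα : α ≤ i) :
    StrictAntiOn (fun x : ℝ => x ^ α * |polygamma i x|) (Set.Ioi 0) := by
  have hG : ∀ x : ℝ, 0 < x → HasDerivAt (fun y : ℝ => y ^ α * ((Nat.factorial i : ℝ) * T (i+1) y))
      (α * x ^ (α - 1) * ((Nat.factorial i : ℝ) * T (i+1) x)
        + x ^ α * ((Nat.factorial i : ℝ) * (-((i:ℝ)+1) * T (i+2) x))) x := by
    intro x hx
    have h1 : HasDerivAt (fun y : ℝ => y ^ α) (α * x ^ (α - 1)) x :=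
      Real.hasDerivAt_rpow_const (Or.inl hx.ne')
    have h2 : HasDerivAt (fun y : ℝ => (Nat.factorial i : ℝ) * T (i+1) y)
        ((Nat.factorial i : ℝ) * (-((i:ℝ)+1) * T (i+2) x)) x := by
      have := (hasDerivAt_T (p := i+1) (by omega) hx).const_mul (Nat.factorial i : ℝ)
      refine HasDerivAt.congr_deriv this ?_
      push_cast
      ring
    exact h1.mul h2
  have hderiv_neg : ∀ x : ℝ, 0 < x →
      α * x ^ (α - 1) * ((Nat.factorial i : ℝ) * T (i+1) x)
        + x ^ α * ((Nat.factorial i : ℝ) * (-((i:ℝ)+1) * T (i+2) x)) < 0 := by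
    intro x hx
    have hP : (0:ℝ) < x ^ (α - 1) := Real.rpow_pos_of_pos hx _
    have hfac : (0:ℝ) < (Nat.factorial i : ℝ) := by exact_mod_cast Nat.factorial_pos i
    have hxα : x ^ α = x ^ (α - 1) * x := by
      rw [← Real.rpow_add_one hx.ne' (α - 1), sub_add_cancel]
    have hT1 : 0 < T (i+1) x := T_pos hx (by omega)
    have hkey := key_ineq hx hi
    have hαT : α * T (i+1) x ≤ (i:ℝ) * T (i+1) x :=
      mul_le_mul_of_nonneg_right hα hT1.le
    have hmain : α * T (i+1) x - ((i:ℝ)+1) * (x * T (i+2) x) < 0 := by linarith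
    have heq : α * x ^ (α - 1) * ((Nat.factorial i : ℝ) * T (i+1) x)
        + x ^ α * ((Nat.factorial i : ℝ) * (-((i:ℝ)+1) * T (i+2) x))
        = x ^ (α - 1) * (Nat.factorial i : ℝ) * (α * T (i+1) x - ((i:ℝ)+1) * (x * T (i+2) x)) := by
      rw [hxα]
      ring
    rw [heq]
    exact mul_neg_of_pos_of_neg (by positivity) hmain
  have hstrict : StrictAntiOn (fun x : ℝ => x ^ α * ((Nat.factorial i : ℝ) * T (i+1) x)) (Ioi 0) := by
    apply strictAntiOn_of_deriv_neg (convex_Ioi 0)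
    · exact fun x hx => ((hG x hx).continuousAt).continuousWithinAt
    · intro x hx
      rw [interior_Ioi] at hx
      rw [(hG x hx).deriv]
      exact hderiv_neg x hx
  intro a ha b hb hab
  have := hstrict ha hb hab
  simpa only [abs_polygamma hi (mem_Ioi.mp ha), abs_polygamma hi (mem_Ioi.mp hb)] using this
end

section
/- For every positive integer i and every real α ≥ i + 1, the function x ↦ x^α |ψ^{(i)}(x)| is strictly increasing on (0, ∞). -/
open Real Set MeasureTheory Filter

open Topology

noncomputable def pgS (k : ℕ) (x : ℝ) : ℝ := ∑' m : ℕ, ((x + m) ^ k)⁻¹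

noncomputable def digSum (y : ℝ) : ℝ := ∑' m : ℕ, (((m : ℝ) + 1)⁻¹ - (y + m)⁻¹)

noncomputable def dig (y : ℝ) : ℝ := -Real.eulerMascheroniConstant + digSum y

lemma sq_inv_summable : Summable (fun m : ℕ => (((m : ℝ) + 1) ^ 2)⁻¹) := by
  have h := (summable_nat_add_iff 1).2 ((Real.summable_one_div_nat_pow (p := 2)).2 (by norm_num))
  simpa [one_div] using h

lemma pg_le {x : ℝ} (hx : 0 < x) (m : ℕ) : min x 1 * ((m : ℝ) + 1) ≤ x + m := by
  rcases le_total x 1 with h | h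
  · rw [min_eq_left h]; nlinarith [Nat.cast_nonneg (α := ℝ) m]
  · rw [min_eq_right h]; nlinarith [Nat.cast_nonneg (α := ℝ) m]

lemma summable_pg {k : ℕ} (hk : 2 ≤ k) {x : ℝ} (hx : 0 < x) :
    Summable (fun m : ℕ => ((x + m) ^ k)⁻¹) := by
  set c := min x 1 with hc
  have hc0 : 0 < c := lt_min hx one_pos
  refine Summable.of_nonneg_of_le (fun m => by positivity) (fun m => ?_)
    ((sq_inv_summable).mul_left (c ^ k)⁻¹)
  have h1 : c * ((m : ℝ) + 1) ≤ x + m := pg_le hx m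
  have h2 : ((m : ℝ) + 1) ^ 2 ≤ ((m : ℝ) + 1) ^ k :=
    pow_le_pow_right₀ (by nlinarith [Nat.cast_nonneg (α := ℝ) m]) hk
  have h3 : c ^ k * ((m : ℝ) + 1) ^ 2 ≤ (x + m) ^ k := by
    calc c ^ k * ((m : ℝ) + 1) ^ 2 ≤ c ^ k * ((m : ℝ) + 1) ^ k := by
          apply mul_le_mul_of_nonneg_left h2 (by positivity)
      _ = (c * ((m : ℝ) + 1)) ^ k := (mul_pow _ _ _).symm
      _ ≤ (x + m) ^ k := pow_le_pow_left₀ (by positivity) h1 k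
  rw [← mul_inv]
  exact inv_anti₀ (by positivity) h3


lemma pgS_pos {k : ℕ} (hk : 2 ≤ k) {x : ℝ} (hx : 0 < x) : 0 < pgS k x :=
  Summable.tsum_pos (summable_pg hk hx) (fun m => by positivity) 0 (by positivity)

lemma hasDerivAt_term {k : ℕ} (hk : 1 ≤ k) (m : ℕ) {y : ℝ} (hy : 0 < y) :
    HasDerivAt (fun z : ℝ => ((z + m) ^ k)⁻¹) (-(k : ℝ) * ((y + m) ^ (k + 1))⁻¹) y := by
  have hym : (0 : ℝ) < y + m := by positivity
  have h1 : HasDerivAt (fun z : ℝ => (z + m) ^ k) ((k : ℝ) * (y + m) ^ (k - 1)) y := by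
    simpa using ((hasDerivAt_id y).add_const (m : ℝ)).fun_pow k
  have h2 := h1.fun_inv (by positivity)
  convert! h2 using 1
  rw [eq_div_iff (by positivity)]
  have : ((y + m) ^ k) ^ 2 = (y + m) ^ (k + 1) * (y + m) ^ (k - 1) := by
    rw [← pow_add, ← pow_mul]
    congr 1
    omega
  rw [this]
  field_simp

lemma hasDerivAt_pgS {k : ℕ} (hk : 2 ≤ k) {x : ℝ} (hx : 0 < x) :
    HasDerivAt (pgS k) (-(k : ℝ) * pgS (k + 1) x) x := by
  have hx2 : 0 < x / 2 := by linarith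
  have hmem : x ∈ Ioo (x / 2) (x + 1) := ⟨by linarith, by linarith⟩
  have hsub : ∀ y ∈ Ioo (x / 2) (x + 1), 0 < y := fun y hy => lt_trans hx2 hy.1
  -- uniform convergence of derivatives
  have hu : Summable (fun m : ℕ => (k : ℝ) * ((x / 2 + m) ^ (k + 1))⁻¹) :=
    (summable_pg (by omega) hx2).mul_left _
  have hunif : TendstoUniformlyOn
      (fun (n : ℕ) (y : ℝ) => ∑ m ∈ Finset.range n, -(k : ℝ) * ((y + m) ^ (k + 1))⁻¹)
      (fun y => ∑' m : ℕ, -(k : ℝ) * ((y + m) ^ (k + 1))⁻¹) atTop (Ioo (x / 2) (x + 1)) := by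
    apply tendstoUniformlyOn_tsum_nat hu
    intro m y hy
    have h1 : (0 : ℝ) < y + m := by have := hsub y hy; positivity
    rw [norm_mul, norm_neg, norm_inv]
    rw [Real.norm_natCast]
    apply mul_le_mul_of_nonneg_left _ (Nat.cast_nonneg k)
    rw [Real.norm_eq_abs, abs_pow, abs_of_pos h1]
    apply inv_anti₀ (by positivity)
    exact pow_le_pow_left₀ (by positivity) (by linarith [hy.1]) _
  have hlim : (fun y : ℝ => ∑' m : ℕ, -(k : ℝ) * ((y + m) ^ (k + 1))⁻¹)
      = fun y : ℝ => -(k : ℝ) * pgS (k + 1) y := by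
    funext y; exact tsum_mul_left
  rw [hlim] at hunif
  refine hasDerivAt_of_tendstoUniformlyOn (f := fun (n : ℕ) (y : ℝ) => ∑ m ∈ Finset.range n, ((y + m) ^ k)⁻¹) isOpen_Ioo hunif ?_ ?_ hmem
  · filter_upwards with n y hy
    exact HasDerivAt.fun_sum (fun m _ => hasDerivAt_term (by omega) m (hsub y hy))
  · intro y hy
    exact (summable_pg hk (hsub y hy)).hasSum.tendsto_sum_nat

lemma dig_term_bound {x y : ℝ} (hx : 0 < x) (hy : y ∈ Ioo (x / 2) (x + 1)) (m : ℕ) :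
    |((m : ℝ) + 1)⁻¹ - (y + m)⁻¹| ≤
      ((x + 2) * (min (x / 2) 1)⁻¹) * (((m : ℝ) + 1) ^ 2)⁻¹ := by
  have hx2 : 0 < x / 2 := by linarith
  have hy0 : 0 < y := lt_trans hx2 hy.1
  have hym : (0 : ℝ) < y + m := by positivity
  have hm1 : (0 : ℝ) < (m : ℝ) + 1 := by positivity
  set c := min (x / 2) 1 with hc
  have hc0 : 0 < c := lt_min hx2 one_pos
  have h1 : ((m : ℝ) + 1)⁻¹ - (y + m)⁻¹ = (y - 1) * (((m : ℝ) + 1)⁻¹ * (y + m)⁻¹) := by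
    field_simp
    ring
  have h2 : c * (((m : ℝ) + 1) ^ 2) ≤ ((m : ℝ) + 1) * (y + m) := by
    have hcm : c * ((m : ℝ) + 1) ≤ y + m :=
      le_trans (pg_le hx2 m) (by linarith [hy.1])
    nlinarith
  rw [h1, abs_mul, abs_of_pos (by positivity : (0:ℝ) < ((m : ℝ) + 1)⁻¹ * (y + m)⁻¹)]
  have hy1 : |y - 1| ≤ x + 2 := by
    rw [abs_le]; constructor <;> nlinarith [hy.1, hy.2]
  calc |y - 1| * (((m : ℝ) + 1)⁻¹ * (y + m)⁻¹)
      ≤ (x + 2) * (((m : ℝ) + 1)⁻¹ * (y + m)⁻¹) := by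
        apply mul_le_mul_of_nonneg_right hy1 (by positivity)
    _ ≤ (x + 2) * (c⁻¹ * (((m : ℝ) + 1) ^ 2)⁻¹) := by
        apply mul_le_mul_of_nonneg_left _ (by linarith)
        rw [← mul_inv, ← mul_inv]
        exact inv_anti₀ (by positivity) h2
    _ = ((x + 2) * c⁻¹) * (((m : ℝ) + 1) ^ 2)⁻¹ := by ring

lemma summable_dig_terms {y : ℝ} (hy : 0 < y) :
    Summable (fun m : ℕ => ((m : ℝ) + 1)⁻¹ - (y + m)⁻¹) := by
  apply Summable.of_abs
  apply Summable.of_nonneg_of_le (fun m => abs_nonneg _)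
    (fun m => dig_term_bound hy ⟨by linarith, by linarith⟩ m)
  exact sq_inv_summable.mul_left _

lemma hasDerivAt_digSum {x : ℝ} (hx : 0 < x) : HasDerivAt digSum (pgS 2 x) x := by
  have hx2 : 0 < x / 2 := by linarith
  have hmem : x ∈ Ioo (x / 2) (x + 1) := ⟨by linarith, by linarith⟩
  have hsub : ∀ y ∈ Ioo (x / 2) (x + 1), 0 < y := fun y hy => lt_trans hx2 hy.1
  have hu : Summable (fun m : ℕ => ((x / 2 + m) ^ 2)⁻¹) := summable_pg le_rfl hx2
  have hunif : TendstoUniformlyOn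
      (fun (n : ℕ) (y : ℝ) => ∑ m ∈ Finset.range n, ((y + m) ^ 2)⁻¹)
      (fun y : ℝ => pgS 2 y) atTop (Ioo (x / 2) (x + 1)) := by
    apply tendstoUniformlyOn_tsum_nat hu
    intro m y hy
    have h1 : (0 : ℝ) < y + m := by have := hsub y hy; positivity
    rw [Real.norm_eq_abs, abs_inv, abs_pow, abs_of_pos h1]
    apply inv_anti₀ (by positivity)
    exact pow_le_pow_left₀ (by positivity) (by linarith [hy.1]) _
  refine hasDerivAt_of_tendstoUniformlyOn
    (f := fun (n : ℕ) (y : ℝ) => ∑ m ∈ Finset.range n, (((m : ℝ) + 1)⁻¹ - (y + m)⁻¹))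
    isOpen_Ioo hunif ?_ ?_ hmem
  · filter_upwards with n y hy
    apply HasDerivAt.fun_sum
    intro m _
    have h1 : (0 : ℝ) < y + m := by have := hsub y hy; positivity
    have h2 := (((hasDerivAt_id y).add_const (m : ℝ)).fun_inv h1.ne').const_sub (((m : ℝ) + 1)⁻¹)
    convert! h2 using 1
    field_simp
    rw [id, div_self (pow_pos h1 2).ne']
  · intro y hy
    exact (summable_dig_terms (hsub y hy)).hasSum.tendsto_sum_nat

lemma hasDerivAt_dig {x : ℝ} (hx : 0 < x) : HasDerivAt dig (pgS 2 x) x :=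
  (hasDerivAt_digSum hx).const_add _

lemma hasDerivAt_logGammaSeq (n : ℕ) {y : ℝ} (hy : 0 < y) :
    HasDerivAt (fun z : ℝ => Real.BohrMollerup.logGammaSeq z n)
      (Real.log n - ∑ m ∈ Finset.range (n + 1), (y + m)⁻¹) y := by
  have h1 : HasDerivAt (fun z : ℝ => z * Real.log n + Real.log (n.factorial : ℝ)) (Real.log n) y := by
    simpa using (hasDerivAt_mul_const (Real.log n)).add_const (Real.log (n.factorial : ℝ))
  have h2 : HasDerivAt (fun z : ℝ => ∑ m ∈ Finset.range (n + 1), Real.log (z + m))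
      (∑ m ∈ Finset.range (n + 1), (y + m)⁻¹) y := by
    apply HasDerivAt.fun_sum
    intro m _
    have hym : (0 : ℝ) < y + m := by positivity
    have := ((hasDerivAt_id y).add_const (m : ℝ)).log hym.ne'
    simpa [one_div] using this
  exact h1.sub h2

lemma const_tendsto :
    Tendsto (fun n : ℕ => Real.log n - ∑ m ∈ Finset.range (n + 1), ((m : ℝ) + 1)⁻¹)
      atTop (𝓝 (-Real.eulerMascheroniConstant)) := by
  have hharm : ∀ n : ℕ, ∑ m ∈ Finset.range (n + 1), ((m : ℝ) + 1)⁻¹ = (harmonic (n + 1) : ℝ) := by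
    intro n
    rw [harmonic]
    push_cast
    rfl
  have hA : Tendsto (fun n : ℕ => (harmonic (n + 1) : ℝ) - Real.log ((n : ℝ) + 1)) atTop
      (𝓝 Real.eulerMascheroniConstant) := by
    have := Real.tendsto_harmonic_sub_log.comp (tendsto_add_atTop_nat 1)
    simpa [Function.comp_def] using this
  have hB : Tendsto (fun n : ℕ => Real.log ((n : ℝ) + 1) - Real.log n) atTop (𝓝 0) :=
    Real.tendsto_log_nat_add_one_sub_log
  have := (hA.add hB).neg
  rw [add_zero] at this
  apply this.congr
  intro n
  rw [hharm]
  ring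

lemma tlu_deriv :
    TendstoLocallyUniformlyOn
      (fun (n : ℕ) (y : ℝ) => Real.log n - ∑ m ∈ Finset.range (n + 1), (y + m)⁻¹)
      dig atTop (Ioi 0) := by
  intro u hu x hx
  rw [mem_Ioi] at hx
  refine ⟨Ioo (x / 2) (x + 1), mem_nhdsWithin_of_mem_nhds
    (Ioo_mem_nhds (by linarith) (by linarith)), ?_⟩
  have hsum : Summable (fun m : ℕ => ((x + 2) * (min (x / 2) 1)⁻¹) * (((m : ℝ) + 1) ^ 2)⁻¹) :=
    sq_inv_summable.mul_left _
  have hS : TendstoUniformlyOn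
      (fun (n : ℕ) (y : ℝ) => ∑ m ∈ Finset.range n, (((m : ℝ) + 1)⁻¹ - (y + m)⁻¹))
      digSum atTop (Ioo (x / 2) (x + 1)) := by
    apply tendstoUniformlyOn_tsum_nat hsum
    intro m y hy
    exact dig_term_bound hx hy m
  have hS' : TendstoUniformlyOn
      (fun (n : ℕ) (y : ℝ) => ∑ m ∈ Finset.range (n + 1), (((m : ℝ) + 1)⁻¹ - (y + m)⁻¹))
      digSum atTop (Ioo (x / 2) (x + 1)) := by
    intro v hv
    exact (tendsto_add_atTop_nat 1).eventually (hS v hv)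
  have hC : TendstoUniformlyOn
      (fun (n : ℕ) (_ : ℝ) => Real.log n - ∑ m ∈ Finset.range (n + 1), ((m : ℝ) + 1)⁻¹)
      (fun _ => -Real.eulerMascheroniConstant) atTop (Ioo (x / 2) (x + 1)) :=
    const_tendsto.tendstoUniformlyOn_const _
  have := hC.add hS'
  have heq : ∀ (n : ℕ) (y : ℝ),
      (Real.log n - ∑ m ∈ Finset.range (n + 1), ((m : ℝ) + 1)⁻¹)
        + ∑ m ∈ Finset.range (n + 1), (((m : ℝ) + 1)⁻¹ - (y + m)⁻¹)
      = Real.log n - ∑ m ∈ Finset.range (n + 1), (y + m)⁻¹ := by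
    intro n y
    rw [Finset.sum_sub_distrib]
    ring
  refine (this.congr ?_) u hu
  filter_upwards with n y hy
  exact heq n y

lemma hasDerivAt_logGamma {x : ℝ} (hx : 0 < x) :
    HasDerivAt (fun x : ℝ => Real.log (Real.Gamma x)) (dig x) x := by
  refine hasDerivAt_of_tendstoLocallyUniformlyOn
    (f := fun (n : ℕ) (y : ℝ) => Real.BohrMollerup.logGammaSeq y n)
    isOpen_Ioi tlu_deriv ?_ ?_ hx
  · filter_upwards with n y hy
    exact hasDerivAt_logGammaSeq n hy
  · intro y hy
    exact Real.BohrMollerup.tendsto_log_gamma hy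

lemma iteratedDeriv_logGamma {i : ℕ} (hi : 1 ≤ i) {x : ℝ} (hx : 0 < x) :
    iteratedDeriv (i + 1) (fun x => Real.log (Real.Gamma x)) x
      = (-1 : ℝ) ^ (i + 1) * (Nat.factorial i : ℝ) * pgS (i + 1) x := by
  induction i, hi using Nat.le_induction generalizing x with
  | base =>
    rw [iteratedDeriv_succ, iteratedDeriv_one]
    have h1 : deriv (deriv (fun x : ℝ => Real.log (Real.Gamma x))) x = deriv dig x := by
      apply Filter.EventuallyEq.deriv_eq
      filter_upwards [isOpen_Ioi.mem_nhds hx] with y hy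
      exact (hasDerivAt_logGamma hy).deriv
    rw [h1, (hasDerivAt_dig hx).deriv]
    norm_num [pgS]
  | succ k hk ih =>
    rw [iteratedDeriv_succ]
    have h1 : deriv (iteratedDeriv (k + 1) (fun x : ℝ => Real.log (Real.Gamma x))) x
        = deriv (fun y => (-1 : ℝ) ^ (k + 1) * (Nat.factorial k : ℝ) * pgS (k + 1) y) x := by
      apply Filter.EventuallyEq.deriv_eq
      filter_upwards [isOpen_Ioi.mem_nhds hx] with y hy
      exact ih hy
    rw [h1]
    have h2 : HasDerivAt (fun y => (-1 : ℝ) ^ (k + 1) * (Nat.factorial k : ℝ) * pgS (k + 1) y)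
        ((-1 : ℝ) ^ (k + 1) * (Nat.factorial k : ℝ) * (-((k : ℝ) + 1) * pgS (k + 2) x)) x := by
      have := (hasDerivAt_pgS (k := k + 1) (by omega) hx).const_mul ((-1 : ℝ) ^ (k + 1) * (Nat.factorial k : ℝ))
      convert! this using 1
      push_cast
      ring
    rw [h2.deriv]
    rw [Nat.factorial_succ]
    push_cast
    ring

lemma pg_lt {k : ℕ} (hk : 2 ≤ k) {x : ℝ} (hx : 0 < x) :
    x * pgS (k + 1) x < pgS k x := by
  have hsum1 : Summable (fun m : ℕ => x * ((x + m) ^ (k + 1))⁻¹) :=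
    (summable_pg (by omega) hx).mul_left x
  have hsum2 : Summable (fun m : ℕ => ((x + m) ^ k)⁻¹) := summable_pg hk hx
  have key : ∀ m : ℕ, x * ((x + m) ^ (k + 1))⁻¹ ≤ ((x + m) ^ k)⁻¹ := by
    intro m
    have hm : (0 : ℝ) < x + m := by positivity
    calc x * ((x + m) ^ (k + 1))⁻¹ = (x / (x + m)) * ((x + m) ^ k)⁻¹ := by
          rw [pow_succ]
          field_simp
      _ ≤ 1 * ((x + m) ^ k)⁻¹ := by
          apply mul_le_mul_of_nonneg_right _ (by positivity)
          rw [div_le_one hm]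
          simpa using Nat.cast_nonneg (α := ℝ) m
      _ = ((x + m) ^ k)⁻¹ := one_mul _
  have keystrict : x * ((x + (1 : ℕ)) ^ (k + 1))⁻¹ < ((x + (1 : ℕ)) ^ k)⁻¹ := by
    have hm : (0 : ℝ) < x + (1 : ℕ) := by positivity
    calc x * ((x + (1:ℕ)) ^ (k + 1))⁻¹ = (x / (x + (1:ℕ))) * ((x + (1:ℕ)) ^ k)⁻¹ := by
          rw [pow_succ]
          field_simp
      _ < 1 * ((x + (1:ℕ)) ^ k)⁻¹ := by
          apply mul_lt_mul_of_pos_right _ (by positivity)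
          rw [div_lt_one hm]
          norm_num
      _ = ((x + (1:ℕ)) ^ k)⁻¹ := one_mul _
  have h1 : x * pgS (k + 1) x = ∑' m : ℕ, x * ((x + m) ^ (k + 1))⁻¹ := by
    rw [pgS, tsum_mul_left]
  rw [h1, pgS]
  exact Summable.tsum_lt_tsum key keystrict hsum1 hsum2

theorem stmt_8 (i : ℕ) (hi : 1 ≤ i) (α : ℝ) (hα : (i : ℝ) + 1 ≤ α) :
    StrictMonoOn (fun x : ℝ => x ^ α * |polygamma i x|) (Set.Ioi 0) := by
  have h2i : 2 ≤ i + 1 := by omega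
  have hc : (0 : ℝ) < (Nat.factorial i : ℝ) := by
    exact_mod_cast i.factorial_pos
  set c : ℝ := (Nat.factorial i : ℝ) with hcdef
  have habs : ∀ x : ℝ, x ∈ Ioi (0:ℝ) → |polygamma i x| = c * pgS (i + 1) x := by
    intro x hx
    rw [mem_Ioi] at hx
    have h := iteratedDeriv_logGamma hi hx
    have : polygamma i x = (-1 : ℝ) ^ (i + 1) * c * pgS (i + 1) x := h
    rw [this, abs_mul, abs_mul, abs_pow, abs_neg, abs_one, one_pow, one_mul,
      abs_of_pos hc, abs_of_pos (pgS_pos h2i hx)]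
  have hmono : StrictMonoOn (fun x : ℝ => x ^ α * (c * pgS (i + 1) x)) (Ioi 0) := by
    have hD : ∀ x : ℝ, x ∈ Ioi (0:ℝ) → HasDerivAt (fun x : ℝ => x ^ α * (c * pgS (i + 1) x))
        (α * x ^ (α - 1) * (c * pgS (i + 1) x)
          + x ^ α * (c * (-((i : ℝ) + 1) * pgS (i + 2) x))) x := by
      intro x hx
      rw [mem_Ioi] at hx
      have h1 : HasDerivAt (fun x : ℝ => x ^ α) (α * x ^ (α - 1)) x :=
        Real.hasDerivAt_rpow_const (Or.inl hx.ne')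
      have h2 : HasDerivAt (fun x : ℝ => c * pgS (i + 1) x)
          (c * (-((i : ℝ) + 1) * pgS (i + 2) x)) x := by
        have := (hasDerivAt_pgS (k := i + 1) h2i hx).const_mul c
        convert! this using 2
        push_cast
        ring
      exact h1.mul h2
    apply strictMonoOn_of_deriv_pos (convex_Ioi 0)
    · intro x hx
      exact ((hD x hx).continuousAt).continuousWithinAt
    · intro x hx
      rw [interior_Ioi] at hx
      rw [(hD x hx).deriv]
      have hx' : (0 : ℝ) < x := hx
      have hP1 := pgS_pos h2i hx'
      have hP2 := pgS_pos (k := i + 2) (by omega) hx'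
      have hlt := pg_lt (k := i + 1) h2i hx'
      have hxα : x ^ α = x ^ (α - 1) * x := by
        rw [← Real.rpow_add_one hx'.ne']
        ring_nf
      have hxα1 : (0 : ℝ) < x ^ (α - 1) := Real.rpow_pos_of_pos hx' _
      have key : ((i : ℝ) + 1) * (x * pgS (i + 2) x) < α * pgS (i + 1) x := by
        have h3 : ((i : ℝ) + 1) * (x * pgS (i + 2) x)
            < ((i : ℝ) + 1) * pgS (i + 1) x := by
          apply mul_lt_mul_of_pos_left _ (by positivity)
          exact hlt
        have h4 : ((i : ℝ) + 1) * pgS (i + 1) x ≤ α * pgS (i + 1) x :=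
          mul_le_mul_of_nonneg_right hα hP1.le
        linarith
      have goalEq : α * x ^ (α - 1) * (c * pgS (i + 1) x)
            + x ^ α * (c * (-((i : ℝ) + 1) * pgS (i + 2) x))
          = c * x ^ (α - 1) * (α * pgS (i + 1) x - ((i : ℝ) + 1) * (x * pgS (i + 2) x)) := by
        rw [hxα]
        ring
      rw [goalEq]
      exact mul_pos (mul_pos hc hxα1) (sub_pos.mpr key)
  intro a ha b hb hab
  have := hmono ha hb hab
  simp only
  rw [habs a ha, habs b hb]
  exact this
end

section
/- Let i be a positive integer and α a real number. If the function x ↦ x^α |ψ^{(i)}(x)| is strictly increasing on (0, ∞), then α ≥ i + 1. -/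
open Real Set MeasureTheory Filter

lemma contDiffAt_logGamma {n : ℕ∞} {x : ℝ} (hx : 0 < x) :
    ContDiffAt ℝ n (fun y => Real.log (Real.Gamma y)) x := by
  have hS : IsOpen {z : ℂ | 0 < z.re} := isOpen_lt continuous_const Complex.continuous_re
  have hd : DifferentiableOn ℂ Complex.Gamma {z : ℂ | 0 < z.re} := by
    intro z hz
    refine (Complex.differentiableAt_Gamma z fun m hm => ?_).differentiableWithinAt
    rw [hm] at hz
    simp only [Set.mem_setOf_eq, Complex.neg_re, Complex.natCast_re] at hz
    exact absurd hz (neg_nonpos.mpr (Nat.cast_nonneg m : (0:ℝ) ≤ m)).not_gt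
  have ha : AnalyticAt ℂ Complex.Gamma (x : ℂ) :=
    hd.analyticAt (hS.mem_nhds (by simpa using hx))
  have h2 : ContDiffAt ℝ n Complex.Gamma (x : ℂ) :=
    (ha.contDiffAt (n := n)).restrict_scalars ℝ
  have h3 : ContDiffAt ℝ n (fun y : ℝ => (Complex.Gamma (y : ℂ)).re) x :=
    (Complex.reCLM.contDiff.contDiffAt.comp _
      (h2.comp x Complex.ofRealCLM.contDiff.contDiffAt))
  have hG : ContDiffAt ℝ n Real.Gamma x := by
    refine h3.congr_of_eventuallyEq ?_
    filter_upwards with y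
    rw [Complex.Gamma_ofReal, Complex.ofReal_re]
  exact (Real.contDiffAt_log.mpr (Real.Gamma_pos_of_pos hx).ne').comp x hG

lemma iteratedDerivWithin_of_isOpen' {f : ℝ → ℝ} {s : Set ℝ} {x : ℝ} (n : ℕ)
    (hs : IsOpen s) (hx : x ∈ s) : iteratedDerivWithin n f s x = iteratedDeriv n f x := by
  rw [iteratedDerivWithin, iteratedDeriv, iteratedFDerivWithin_of_isOpen n hs hx]

lemma polygamma_rec (i : ℕ) {x : ℝ} (hx : 0 < x) :
    polygamma i x = polygamma i (x + 1)
      - (∏ j ∈ Finset.range i, (-1 - (j : ℝ))) * x ^ (-1 - (i : ℤ)) := by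
  have key : polygamma i x
      = iteratedDeriv (i + 1) (fun y => Real.log (Real.Gamma (y + 1))) x
        - iteratedDeriv (i + 1) Real.log x := by
    have h1 : polygamma i x
        = iteratedDeriv (i + 1) ((fun y => Real.log (Real.Gamma (y + 1))) - Real.log) x := by
      apply Filter.EventuallyEq.iteratedDeriv_eq
      filter_upwards [Ioi_mem_nhds hx] with y hy
      have hy0 : (0 : ℝ) < y := hy
      simp only [Pi.sub_apply]
      rw [Real.Gamma_add_one hy0.ne', Real.log_mul hy0.ne' (Real.Gamma_pos_of_pos hy0).ne']
      ring
    have hF : ContDiffOn ℝ (i + 1 : ℕ) (fun y : ℝ => Real.log (Real.Gamma (y + 1))) (Ioi 0) := by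
      intro y hy
      have hy1 : (0 : ℝ) < y + 1 := by have := mem_Ioi.mp hy; linarith
      exact ((contDiffAt_logGamma (n := (i + 1 : ℕ)) hy1).comp y
        ((contDiff_id.add contDiff_const).contDiffAt)).contDiffWithinAt
    have hL : ContDiffOn ℝ (i + 1 : ℕ) Real.log (Ioi 0) :=
      Real.contDiffOn_log.mono fun y hy => ne_of_gt hy
    have hmem : x ∈ Ioi (0 : ℝ) := mem_Ioi.mpr hx
    rw [h1, ← iteratedDerivWithin_of_isOpen' (s := Ioi 0)
        (f := (fun y => Real.log (Real.Gamma (y + 1))) - Real.log) (i + 1) isOpen_Ioi hmem,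
      iteratedDerivWithin_sub hmem (uniqueDiffOn_Ioi 0) (hF x hmem) (hL x hmem),
      iteratedDerivWithin_of_isOpen' _ isOpen_Ioi hmem,
      iteratedDerivWithin_of_isOpen' _ isOpen_Ioi hmem]
  have hC : iteratedDeriv (i + 1) (fun y => Real.log (Real.Gamma (y + 1))) x
      = polygamma i (x + 1) :=
    congrFun (iteratedDeriv_comp_add_const (i + 1) (fun y => Real.log (Real.Gamma y)) 1) x
  have hD : iteratedDeriv (i + 1) Real.log x
      = (∏ j ∈ Finset.range i, (-1 - (j : ℝ))) * x ^ (-1 - (i : ℤ)) := by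
    rw [iteratedDeriv_succ', Real.deriv_log', iteratedDeriv_eq_iterate]
    rw [iter_deriv_inv]
    congr 1
    rw [show (∏ j ∈ Finset.range i, (-1 - (j : ℝ))) = ∏ j ∈ Finset.range i, ((-1) * ((j + 1 : ℕ) : ℝ)) from
        Finset.prod_congr rfl (fun j _ => by push_cast; ring),
      Finset.prod_mul_distrib, Finset.prod_const, Finset.card_range, ← Nat.cast_prod,
      Finset.prod_range_add_one_eq_factorial]
  rw [key, hC, hD]

lemma abs_prod_neg (i : ℕ) : |∏ j ∈ Finset.range i, (-1 - (j : ℝ))| = (i.factorial : ℝ) := by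
  rw [Finset.abs_prod]
  have : ∀ j ∈ Finset.range i, |(-1 - (j : ℝ))| = ((j + 1 : ℕ) : ℝ) := by
    intro j _
    rw [abs_of_neg (by have := (Nat.cast_nonneg j : (0:ℝ) ≤ j); linarith)]
    push_cast; ring
  rw [Finset.prod_congr rfl this, ← Nat.cast_prod]
  norm_cast
  exact Finset.prod_range_add_one_eq_factorial i

lemma tendsto_rpow_nhdsGT_zero {c : ℝ} (hc : c < 0) :
    Tendsto (fun x : ℝ => x ^ c) (nhdsWithin (0 : ℝ) (Ioi 0)) atTop := by
  have h := (tendsto_rpow_atTop (y := -c) (by linarith)).comp tendsto_inv_nhdsGT_zero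
  refine h.congr' ?_
  filter_upwards [self_mem_nhdsWithin] with x hx
  have hx0 : (0 : ℝ) < x := hx
  show (x⁻¹) ^ (-c) = x ^ c
  rw [Real.inv_rpow hx0.le, ← Real.rpow_neg hx0.le, neg_neg]

theorem stmt_9 (i : ℕ) (hi : 1 ≤ i) (α : ℝ)
    (h : StrictMonoOn (fun x : ℝ => x ^ α * |polygamma i x|) (Set.Ioi 0)) :
    (i : ℝ) + 1 ≤ α := by
  by_contra hlt
  push_neg at hlt
  -- continuity of polygamma i on Ioi 0, bound on Icc 1 2
  have hcd : ContDiffOn ℝ ((i + 1 : ℕ) : ℕ∞) (fun y => Real.log (Real.Gamma y)) (Ioi 0) :=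
    fun y hy => (contDiffAt_logGamma (mem_Ioi.mp hy)).contDiffWithinAt
  have hcont : ContinuousOn (polygamma i) (Ioi 0) := by
    have hc := hcd.continuousOn_iteratedDerivWithin (m := i + 1) le_rfl (uniqueDiffOn_Ioi 0)
    exact hc.congr fun y hy => (iteratedDerivWithin_of_isOpen' _ isOpen_Ioi hy).symm
  obtain ⟨M, hM⟩ := isCompact_Icc.exists_bound_of_continuousOn
    (hcont.mono (fun y hy => lt_of_lt_of_le zero_lt_one hy.1) : ContinuousOn (polygamma i) (Icc 1 2))
  have hM0 : 0 ≤ M := le_trans (norm_nonneg _) (hM 1 ⟨le_refl 1, one_le_two⟩)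
  -- lower bound for |polygamma i x| on (0,1)
  have hlow : ∀ x ∈ Ioo (0 : ℝ) 1,
      (i.factorial : ℝ) * x ^ (-((i : ℝ) + 1)) - M ≤ |polygamma i x| := by
    intro x hx
    have hx0 : (0 : ℝ) < x := hx.1
    have hx1 : x + 1 ∈ Icc (1 : ℝ) 2 := ⟨by linarith [hx.1.le], by linarith [hx.2.le]⟩
    have hrec := polygamma_rec i hx0
    have h1 : |polygamma i x| ≥
        |(∏ j ∈ Finset.range i, (-1 - (j : ℝ))) * x ^ (-1 - (i : ℤ))| - |polygamma i (x + 1)| := by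
      rw [hrec]
      have := abs_sub_abs_le_abs_sub ((∏ j ∈ Finset.range i, (-1 - (j : ℝ))) * x ^ (-1 - (i : ℤ)))
        (polygamma i (x + 1))
      calc |(∏ j ∈ Finset.range i, (-1 - (j : ℝ))) * x ^ (-1 - (i : ℤ))| - |polygamma i (x + 1)|
          ≤ |(∏ j ∈ Finset.range i, (-1 - (j : ℝ))) * x ^ (-1 - (i : ℤ)) - polygamma i (x + 1)| :=
            this
        _ = |polygamma i (x + 1) - (∏ j ∈ Finset.range i, (-1 - (j : ℝ))) * x ^ (-1 - (i : ℤ))| :=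
            abs_sub_comm _ _
    have h2 : |(∏ j ∈ Finset.range i, (-1 - (j : ℝ))) * x ^ (-1 - (i : ℤ))|
        = (i.factorial : ℝ) * x ^ (-((i : ℝ) + 1)) := by
      rw [abs_mul, abs_prod_neg, abs_of_pos (zpow_pos hx0 _)]
      congr 1
      rw [← Real.rpow_intCast x (-1 - (i : ℤ))]
      norm_num
      ring_nf
    have h3 : |polygamma i (x + 1)| ≤ M := by
      have := hM (x + 1) hx1
      rwa [Real.norm_eq_abs] at this
    rw [h2] at h1
    linarith
  -- tendsto arguments
  set C := (1 : ℝ) ^ α * |polygamma i 1| with hC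
  have ht1 : Tendsto (fun x : ℝ => (i.factorial : ℝ) * x ^ (-((i : ℝ) + 1)))
      (nhdsWithin 0 (Ioi 0)) atTop :=
    (tendsto_rpow_nhdsGT_zero (by have := (Nat.cast_nonneg i : (0:ℝ) ≤ i); linarith)).const_mul_atTop
      (by positivity)
  have ht2 : Tendsto (fun x : ℝ => (i.factorial : ℝ) / 2 * x ^ (α - ((i : ℝ) + 1)))
      (nhdsWithin 0 (Ioi 0)) atTop :=
    (tendsto_rpow_nhdsGT_zero (by linarith)).const_mul_atTop (by positivity)
  have ev1 := ht1.eventually_ge_atTop (2 * M)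
  have ev2 := ht2.eventually_gt_atTop C
  have ev3 : ∀ᶠ x in nhdsWithin (0 : ℝ) (Ioi 0), x ∈ Ioo (0 : ℝ) 1 := by
    filter_upwards [self_mem_nhdsWithin,
      eventually_nhdsWithin_of_eventually_nhds (eventually_lt_nhds zero_lt_one)] with x h1 h2
    exact ⟨h1, h2⟩
  obtain ⟨x, hx1, hx2, hx3⟩ := (ev1.and (ev2.and ev3)).exists
  have hx0 : (0 : ℝ) < x := hx3.1
  -- the contradiction
  have hmono : x ^ α * |polygamma i x| < C :=
    h (mem_Ioi.mpr hx0) (mem_Ioi.mpr zero_lt_one) hx3.2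
  have hXpos : (0 : ℝ) < x ^ (-((i : ℝ) + 1)) := Real.rpow_pos_of_pos hx0 _
  have step1 : (i.factorial : ℝ) / 2 * x ^ (-((i : ℝ) + 1))
      ≤ (i.factorial : ℝ) * x ^ (-((i : ℝ) + 1)) - M := by linarith
  have step2 : (i.factorial : ℝ) / 2 * x ^ (-((i : ℝ) + 1)) ≤ |polygamma i x| :=
    le_trans step1 (hlow x hx3)
  have step3 : (i.factorial : ℝ) / 2 * x ^ (α - ((i : ℝ) + 1)) ≤ x ^ α * |polygamma i x| := by
    have hxa : (0 : ℝ) < x ^ α := Real.rpow_pos_of_pos hx0 _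
    calc (i.factorial : ℝ) / 2 * x ^ (α - ((i : ℝ) + 1))
        = x ^ α * ((i.factorial : ℝ) / 2 * x ^ (-((i : ℝ) + 1))) := by
          rw [show α - ((i : ℝ) + 1) = α + -((i : ℝ) + 1) by ring,
            Real.rpow_add hx0]
          ring
      _ ≤ x ^ α * |polygamma i x| := by
          exact mul_le_mul_of_nonneg_left step2 hxa.le
  linarith
end

section
/- Let i be a positive integer and α a real number. If the function x ↦ x^α |ψ^{(i)}(x)| is strictly decreasing on (0, ∞), then α ≤ i. -/
open Real Set MeasureTheory Filter

noncomputable abbrev LG : ℝ → ℝ := fun x => Real.log (Real.Gamma x)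

lemma analyticAt_cGamma {s : ℂ} (hs : Complex.Gamma s ≠ 0) :
    AnalyticAt ℂ Complex.Gamma s := by
  have h1 : AnalyticAt ℂ (fun z => (Complex.Gamma z)⁻¹) s :=
    Complex.differentiable_one_div_Gamma.analyticAt s
  have h2 := h1.inv (by simpa using hs)
  have e : (fun z => (Complex.Gamma z)⁻¹)⁻¹ = Complex.Gamma := by funext z; simp
  rwa [e] at h2

lemma contDiffAt_rGamma {x : ℝ} (hx : 0 < x) (n : ℕ) : ContDiffAt ℝ n Real.Gamma x := by
  have hne : Complex.Gamma (x : ℂ) ≠ 0 := by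
    rw [Complex.Gamma_ofReal]
    exact_mod_cast (Real.Gamma_pos_of_pos hx).ne'
  have hG : AnalyticAt ℝ Complex.Gamma (x : ℂ) := (analyticAt_cGamma hne).restrictScalars
  have hofReal : AnalyticAt ℝ (fun t : ℝ => (t : ℂ)) x := Complex.ofRealCLM.analyticAt x
  have hin : AnalyticAt ℝ (Complex.Gamma ∘ Complex.ofReal) x := hG.comp hofReal
  have hre : AnalyticAt ℝ (fun z : ℂ => z.re) ((Complex.Gamma ∘ Complex.ofReal) x) :=
    Complex.reCLM.analyticAt _
  have hcomp : AnalyticAt ℝ (fun t : ℝ => (Complex.Gamma (t : ℂ)).re) x :=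
    hre.comp hin
  have heq : (fun t : ℝ => (Complex.Gamma (t : ℂ)).re) = Real.Gamma := by
    funext t; rw [Complex.Gamma_ofReal]; simp
  rw [heq] at hcomp
  exact hcomp.contDiffAt

lemma contDiffAt_LG {x : ℝ} (hx : 0 < x) (n : ℕ) : ContDiffAt ℝ n LG x :=
  (contDiffAt_rGamma hx n).log (Real.Gamma_pos_of_pos hx).ne'

lemma iteratedDerivWithin_isOpen_eq {s : Set ℝ} (hs : IsOpen s) {x : ℝ} (hx : x ∈ s)
    (n : ℕ) (f : ℝ → ℝ) : iteratedDerivWithin n f s x = iteratedDeriv n f x := by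
  rw [iteratedDerivWithin_eq_iteratedFDerivWithin, iteratedDeriv_eq_iteratedFDeriv,
    iteratedFDerivWithin_of_isOpen n hs hx]

lemma prod_neg_one_sub (n : ℕ) :
    (∏ j ∈ Finset.range n, (-1 - (j : ℝ))) = (-1 : ℝ) ^ n * (Nat.factorial n : ℝ) := by
  induction n with
  | zero => simp
  | succ n ih =>
    rw [Finset.prod_range_succ, ih, Nat.factorial_succ]
    push_cast
    ring

lemma iteratedDeriv_log_eq (n : ℕ) (x : ℝ) :
    iteratedDeriv (n + 1) Real.log x = (-1 : ℝ) ^ n * (Nat.factorial n : ℝ) * x ^ (-1 - n : ℤ) := by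
  rw [iteratedDeriv_succ', Real.deriv_log', iteratedDeriv_eq_iterate, iter_deriv_inv]

lemma LG_rec (n : ℕ) {x : ℝ} (hx : 0 < x) :
    iteratedDeriv n LG (x + 1) = iteratedDeriv n LG x + iteratedDeriv n Real.log x := by
  have hFs : ContDiffOn ℝ n LG (Ioi 0) := fun y hy => (contDiffAt_LG hy n).contDiffWithinAt
  have hlogs : ContDiffOn ℝ n Real.log (Ioi 0) := fun y hy =>
    (Real.contDiffAt_log.2 (ne_of_gt hy)).contDiffWithinAt
  have hev : (fun y => LG (y + 1)) =ᶠ[nhds x] (LG + Real.log) := by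
    filter_upwards [isOpen_Ioi.mem_nhds hx] with y hy
    show Real.log (Real.Gamma (y + 1)) = Real.log (Real.Gamma y) + Real.log y
    rw [Real.Gamma_add_one (ne_of_gt hy),
      Real.log_mul (ne_of_gt hy) (Real.Gamma_pos_of_pos hy).ne']
    ring
  have hxm : x ∈ Ioi (0 : ℝ) := hx
  calc iteratedDeriv n LG (x + 1) = iteratedDeriv n (fun y => LG (y + 1)) x := by
        rw [iteratedDeriv_comp_add_const]
    _ = iteratedDeriv n (LG + Real.log) x := hev.iteratedDeriv_eq n
    _ = iteratedDeriv n LG x + iteratedDeriv n Real.log x := by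
        rw [← iteratedDerivWithin_isOpen_eq isOpen_Ioi hxm n (LG + Real.log),
          ← iteratedDerivWithin_isOpen_eq isOpen_Ioi hxm n LG,
          ← iteratedDerivWithin_isOpen_eq isOpen_Ioi hxm n Real.log,
          iteratedDerivWithin_add hxm isOpen_Ioi.uniqueDiffOn (hFs x hxm) (hlogs x hxm)]

lemma polygamma_sum (i N : ℕ) {x : ℝ} (hx : 0 < x) :
    polygamma i (x + N) = polygamma i x +
      (-1 : ℝ) ^ i * (Nat.factorial i : ℝ) *
        ∑ k ∈ Finset.range N, (x + (k : ℝ)) ^ (-1 - (i : ℤ)) := by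
  induction N with
  | zero => simp
  | succ N ih =>
    have hxN : 0 < x + (N : ℝ) := by positivity
    have hc : ((N + 1 : ℕ) : ℝ) = (N : ℝ) + 1 := by push_cast; ring
    have hrec := LG_rec (i + 1) hxN
    calc polygamma i (x + ((N + 1 : ℕ) : ℝ))
        = iteratedDeriv (i + 1) LG ((x + (N : ℝ)) + 1) := by
          rw [hc]; show polygamma i _ = polygamma i _; ring_nf
      _ = polygamma i (x + (N : ℝ)) + iteratedDeriv (i + 1) Real.log (x + (N : ℝ)) := hrec
      _ = polygamma i x +
          (-1 : ℝ) ^ i * (Nat.factorial i : ℝ) *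
            ∑ k ∈ Finset.range (N + 1), (x + (k : ℝ)) ^ (-1 - (i : ℤ)) := by
          rw [ih, iteratedDeriv_log_eq, Finset.sum_range_succ]
          ring

theorem stmt_10 (i : ℕ) (hi : 1 ≤ i) (α : ℝ)
    (h : StrictAntiOn (fun x : ℝ => x ^ α * |polygamma i x|) (Set.Ioi 0)) :
    α ≤ i := by
  by_contra hcon
  push_neg at hcon
  have hi1 : (1 : ℝ) ≤ i := by exact_mod_cast hi
  have hα : (0 : ℝ) < α := by linarith
  set f := fun x : ℝ => x ^ α * |polygamma i x| with hfdef
  have hf1pos : 0 < f 1 := by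
    have h2 : f 2 < f 1 := h (mem_Ioi.2 one_pos) (mem_Ioi.2 two_pos) one_lt_two
    have : (0 : ℝ) ≤ f 2 := by
      simp only [hfdef]; positivity
    linarith
  have key : ∀ N : ℕ, 2 ≤ N →
      (Nat.factorial i : ℝ) / 2 ^ (i + 1) * (N : ℝ) ^ (α - i) < 2 * f 1 := by
    intro N hN
    set n : ℝ := (N : ℝ) with hndef
    have hn2 : (2 : ℝ) ≤ n := by rw [hndef]; exact_mod_cast hN
    have hn0 : (0 : ℝ) < n := by linarith
    have hsum := polygamma_sum i N hn0
    set S : ℝ := ∑ k ∈ Finset.range N, (n + (k : ℝ)) ^ (-1 - (i : ℤ)) with hSdef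
    have hterm : ∀ k ∈ Finset.range N, ((2 * n) ^ (i + 1))⁻¹ ≤ (n + (k : ℝ)) ^ (-1 - (i : ℤ)) := by
      intro k hk
      have hk' : (k : ℝ) < n := by
        rw [hndef]; exact_mod_cast Finset.mem_range.1 hk
      have hnk0 : 0 < n + (k : ℝ) := by positivity
      have hzp : (n + (k : ℝ)) ^ (-1 - (i : ℤ)) = ((n + (k : ℝ)) ^ (i + 1))⁻¹ := by
        rw [show (-1 - (i : ℤ)) = -((i : ℤ) + 1) by ring, zpow_neg]
        norm_cast
      rw [hzp]
      apply inv_anti₀ (by positivity)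
      exact pow_le_pow_left₀ (le_of_lt hnk0) (by linarith) _
    have hSlb : (N : ℝ) * ((2 * n) ^ (i + 1))⁻¹ ≤ S := by
      calc (N : ℝ) * ((2 * n) ^ (i + 1))⁻¹
          = ∑ _k ∈ Finset.range N, ((2 * n) ^ (i + 1))⁻¹ := by
            rw [Finset.sum_const, Finset.card_range, nsmul_eq_mul]
        _ ≤ S := Finset.sum_le_sum hterm
    have hS0 : 0 ≤ S := le_trans (by positivity) hSlb
    have habs : (Nat.factorial i : ℝ) * S ≤ |polygamma i n| + |polygamma i (n + N)| := by
      have : polygamma i (n + N) - polygamma i n = (-1 : ℝ) ^ i * (Nat.factorial i : ℝ) * S := by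
        rw [hsum]; ring
      have htri : |polygamma i (n + N) - polygamma i n|
          ≤ |polygamma i (n + N)| + |polygamma i n| := abs_sub _ _
      rw [this, abs_mul, abs_mul, abs_pow, abs_neg, abs_one, one_pow, one_mul,
        abs_of_nonneg hS0, Nat.abs_cast] at htri
      linarith
    have h2n : n + (N : ℝ) = 2 * n := by rw [hndef]; ring
    have hfn : f n < f 1 := h (mem_Ioi.2 one_pos) (mem_Ioi.2 hn0) (by linarith)
    have hf2n : f (2 * n) < f 1 :=
      h (mem_Ioi.2 one_pos) (mem_Ioi.2 (by linarith)) (by linarith)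
    have hmono : n ^ α ≤ (2 * n) ^ α :=
      Real.rpow_le_rpow (le_of_lt hn0) (by linarith) (le_of_lt hα)
    have hcomb : n ^ α * ((Nat.factorial i : ℝ) * S) < 2 * f 1 := by
      have h1 : n ^ α * ((Nat.factorial i : ℝ) * S)
          ≤ n ^ α * |polygamma i n| + (2 * n) ^ α * |polygamma i (2 * n)| := by
        have := habs
        rw [h2n] at this
        nlinarith [Real.rpow_nonneg (le_of_lt hn0) α, abs_nonneg (polygamma i (2 * n)),
          abs_nonneg (polygamma i n), mul_le_mul_of_nonneg_right hmono (abs_nonneg (polygamma i (2 * n))),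
          mul_le_mul_of_nonneg_left this (Real.rpow_nonneg (le_of_lt hn0) α)]
      have h2 : n ^ α * |polygamma i n| + (2 * n) ^ α * |polygamma i (2 * n)| < 2 * f 1 := by
        have e1 : n ^ α * |polygamma i n| = f n := rfl
        have e2 : (2 * n) ^ α * |polygamma i (2 * n)| = f (2 * n) := rfl
        rw [e1, e2]; linarith
      linarith
    have hineq : n ^ α * ((Nat.factorial i : ℝ) * ((N : ℝ) * ((2 * n) ^ (i + 1))⁻¹)) < 2 * f 1 := by
      refine lt_of_le_of_lt ?_ hcomb
      have hfac : (0 : ℝ) ≤ (Nat.factorial i : ℝ) := by positivity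
      have := mul_le_mul_of_nonneg_left hSlb hfac
      nlinarith [Real.rpow_nonneg (le_of_lt hn0) α]
    have heq : (Nat.factorial i : ℝ) / 2 ^ (i + 1) * n ^ (α - i)
        = n ^ α * ((Nat.factorial i : ℝ) * ((N : ℝ) * ((2 * n) ^ (i + 1))⁻¹)) := by
      have e1 : n ^ ((i : ℕ) : ℝ) = n ^ (i : ℕ) := Real.rpow_natCast n i
      rw [Real.rpow_sub hn0, e1, ← hndef]
      have h2p : ((2 * n) ^ (i + 1) : ℝ) ≠ 0 := by positivity
      have hnp : (n ^ i : ℝ) ≠ 0 := by positivity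
      field_simp
      ring
    rw [heq]
    exact hineq
  have htend : Tendsto (fun N : ℕ => (Nat.factorial i : ℝ) / 2 ^ (i + 1) * (N : ℝ) ^ (α - i))
      atTop atTop := by
    have hC : (0 : ℝ) < (Nat.factorial i : ℝ) / 2 ^ (i + 1) := by positivity
    exact ((tendsto_rpow_atTop (by linarith : (0:ℝ) < α - i)).comp
      tendsto_natCast_atTop_atTop).const_mul_atTop hC
  obtain ⟨N, hN2, hNbig⟩ := (((eventually_ge_atTop 2).and
    (htend.eventually_gt_atTop (2 * f 1))).exists)
  exact absurd (key N hN2) (not_lt.2 (le_of_lt hNbig))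
end
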